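/- arXiv:1305.1342 — 8 statements merged into one kernel-verified Lean document; each statement's English description precedes it below -/
import Mathlib

section
/- Let H_A, H_B, H_C be finite-dimensional complex Hilbert spaces. For any trace-one Hermitian operators Q_AB on H_A ⊗ H_B and Q_AC on H_A ⊗ H_C satisfying the consistency condition Tr_B[Q_AB] = Tr_C[Q_AC], there exists a trace-one Hermitian operator Q_ABC on H_A ⊗ H_B ⊗ H_C such that the partial trace of Q_ABC over H_C equals Q_AB and the partial trace of Q_ABC over H_B equals Q_AC. -/
open Matrix

noncomputable section

/-- Partial trace over the second tensor factor. -/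
def trSnd {A B : Type*} [Fintype B] (Q : Matrix (A × B) (A × B) ℂ) : Matrix A A ℂ :=
  fun a a' => ∑ b : B, Q (a, b) (a', b)

/-- Partial trace of a tripartite operator over the third factor. -/
def trC3 {A B C : Type*} [Fintype C] (w : Matrix (A × B × C) (A × B × C) ℂ) :
    Matrix (A × B) (A × B) ℂ :=
  fun p q => ∑ c : C, w (p.1, p.2, c) (q.1, q.2, c)

/-- Partial trace of a tripartite operator over the second factor. -/
def trB3 {A B C : Type*} [Fintype B] (w : Matrix (A × B × C) (A × B × C) ℂ) :
    Matrix (A × C) (A × C) ℂ :=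
  fun p q => ∑ b : B, w (p.1, b, p.2) (q.1, b, q.2)

/-!
Hermitian extensions, unlike positive ones, always exist. With the pure states `|b₀⟩⟨b₀|`
and `|c₀⟩⟨c₀|`, the operator
`Q_AB ⊗ |c₀⟩⟨c₀| + |b₀⟩⟨b₀| ⊗ Q_AC - Q_A ⊗ |b₀⟩⟨b₀| ⊗ |c₀⟩⟨c₀|`, where `Q_A` is the common
marginal, is Hermitian; tracing out `C` leaves `Q_AB + Q_A ⊗ |b₀⟩⟨b₀| - Q_A ⊗ |b₀⟩⟨b₀|`, and
symmetrically for `B`. Its trace is that of its marginal `Q_AB`.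
-/

section

variable {A B C : Type*}

/-- `M ⊗ |b₀⟩⟨b₀|`. -/
def padSnd [DecidableEq B] (b₀ : B) (M : Matrix A A ℂ) : Matrix (A × B) (A × B) ℂ :=
  fun p q => if p.2 = b₀ ∧ q.2 = b₀ then M p.1 q.1 else 0

/-- `Q ⊗ |c₀⟩⟨c₀|`. -/
def padC3 [DecidableEq C] (c₀ : C) (Q : Matrix (A × B) (A × B) ℂ) :
    Matrix (A × B × C) (A × B × C) ℂ :=
  fun p q => if p.2.2 = c₀ ∧ q.2.2 = c₀ then Q (p.1, p.2.1) (q.1, q.2.1) else 0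

/-- `Q` tensored with `|b₀⟩⟨b₀|` on the middle factor. -/
def padB3 [DecidableEq B] (b₀ : B) (Q : Matrix (A × C) (A × C) ℂ) :
    Matrix (A × B × C) (A × B × C) ℂ :=
  fun p q => if p.2.1 = b₀ ∧ q.2.1 = b₀ then Q (p.1, p.2.2) (q.1, q.2.2) else 0

lemma Matrix.IsHermitian.trSnd [Fintype B] {Q : Matrix (A × B) (A × B) ℂ}
    (hQ : Q.IsHermitian) : (trSnd Q).IsHermitian :=
  IsHermitian.ext fun a a' => by
    unfold _root_.trSnd
    rw [star_sum]
    exact Finset.sum_congr rfl fun b _ => hQ.apply (a, b) (a', b)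

lemma Matrix.IsHermitian.padSnd [DecidableEq B] (b₀ : B) {M : Matrix A A ℂ}
    (hM : M.IsHermitian) : (padSnd b₀ M).IsHermitian :=
  IsHermitian.ext fun p q => by
    unfold _root_.padSnd
    simp only [apply_ite (star : ℂ → ℂ), star_zero]
    exact if_congr and_comm (hM.apply _ _) rfl

lemma Matrix.IsHermitian.padC3 [DecidableEq C] (c₀ : C) {Q : Matrix (A × B) (A × B) ℂ}
    (hQ : Q.IsHermitian) : (padC3 c₀ Q).IsHermitian :=
  IsHermitian.ext fun p q => by
    unfold _root_.padC3
    simp only [apply_ite (star : ℂ → ℂ), star_zero]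
    exact if_congr and_comm (hQ.apply _ _) rfl

lemma Matrix.IsHermitian.padB3 [DecidableEq B] (b₀ : B) {Q : Matrix (A × C) (A × C) ℂ}
    (hQ : Q.IsHermitian) : (padB3 b₀ Q).IsHermitian :=
  IsHermitian.ext fun p q => by
    unfold _root_.padB3
    simp only [apply_ite (star : ℂ → ℂ), star_zero]
    exact if_congr and_comm (hQ.apply _ _) rfl

lemma trSnd_padSnd [Fintype B] [DecidableEq B] (b₀ : B) (M : Matrix A A ℂ) :
    trSnd (padSnd b₀ M) = M := by
  ext a a'
  simp [trSnd, padSnd]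

lemma trC3_padC3 [Fintype C] [DecidableEq C] (c₀ : C) (Q : Matrix (A × B) (A × B) ℂ) :
    trC3 (padC3 c₀ Q) = Q := by
  ext p q
  simp [trC3, padC3]

lemma trB3_padB3 [Fintype B] [DecidableEq B] (b₀ : B) (Q : Matrix (A × C) (A × C) ℂ) :
    trB3 (padB3 b₀ Q) = Q := by
  ext p q
  simp [trB3, padB3]

lemma trB3_padC3 [Fintype B] [DecidableEq C] (c₀ : C) (Q : Matrix (A × B) (A × B) ℂ) :
    trB3 (padC3 c₀ Q) = padSnd c₀ (trSnd Q) := by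
  ext p q
  simp only [trB3, padC3, padSnd, trSnd]
  split_ifs <;> simp

lemma trC3_padB3 [Fintype C] [DecidableEq B] (b₀ : B) (Q : Matrix (A × C) (A × C) ℂ) :
    trC3 (padB3 b₀ Q) = padSnd b₀ (trSnd Q) := by
  ext p q
  simp only [trC3, padB3, padSnd, trSnd]
  split_ifs <;> simp

lemma trC3_add [Fintype C] (w w' : Matrix (A × B × C) (A × B × C) ℂ) :
    trC3 (w + w') = trC3 w + trC3 w' := by
  ext p q
  simp [trC3, Finset.sum_add_distrib]

lemma trC3_sub [Fintype C] (w w' : Matrix (A × B × C) (A × B × C) ℂ) :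
    trC3 (w - w') = trC3 w - trC3 w' := by
  ext p q
  simp [trC3, Finset.sum_sub_distrib]

lemma trB3_add [Fintype B] (w w' : Matrix (A × B × C) (A × B × C) ℂ) :
    trB3 (w + w') = trB3 w + trB3 w' := by
  ext p q
  simp [trB3, Finset.sum_add_distrib]

lemma trB3_sub [Fintype B] (w w' : Matrix (A × B × C) (A × B × C) ℂ) :
    trB3 (w - w') = trB3 w - trB3 w' := by
  ext p q
  simp [trB3, Finset.sum_sub_distrib]

lemma trace_trC3 [Fintype A] [Fintype B] [Fintype C] (w : Matrix (A × B × C) (A × B × C) ℂ) :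
    (trC3 w).trace = w.trace := by
  simp [Matrix.trace, trC3, Fintype.sum_prod_type]

end

lemma Matrix.nonempty_of_trace_ne_zero {n R : Type*} [Fintype n] [AddCommMonoid R]
    {M : Matrix n n R} (h : M.trace ≠ 0) : Nonempty n :=
  not_isEmpty_iff.mp fun _ => h M.trace_eq_zero_of_isEmpty

theorem hermitian_trace_one_extension_general
    {A B C : Type*} [Fintype A] [Fintype B] [DecidableEq B]
    [Fintype C] [DecidableEq C]
    (QAB : Matrix (A × B) (A × B) ℂ) (QAC : Matrix (A × C) (A × C) ℂ)
    (hABherm : QAB.IsHermitian) (hACherm : QAC.IsHermitian)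
    (hABtr : QAB.trace = 1) (hACtr : QAC.trace = 1)
    (hcons : trSnd QAB = trSnd QAC) :
    ∃ QABC : Matrix (A × B × C) (A × B × C) ℂ,
      QABC.IsHermitian ∧ QABC.trace = 1 ∧ trC3 QABC = QAB ∧ trB3 QABC = QAC := by
  obtain ⟨-, b₀⟩ := (nonempty_of_trace_ne_zero (hABtr ▸ one_ne_zero)).some
  obtain ⟨-, c₀⟩ := (nonempty_of_trace_ne_zero (hACtr ▸ one_ne_zero)).some
  let QABC := padC3 c₀ QAB + padB3 b₀ QAC - padC3 c₀ (padSnd b₀ (trSnd QAB))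
  have hC : trC3 QABC = QAB := by
    rw [trC3_sub, trC3_add, trC3_padC3, trC3_padB3, trC3_padC3, hcons, add_sub_cancel_right]
  have hB : trB3 QABC = QAC := by
    rw [trB3_sub, trB3_add, trB3_padC3, trB3_padB3, trB3_padC3, trSnd_padSnd,
      add_sub_cancel_left]
  refine ⟨QABC, ?_, by rw [← trace_trC3, hC, hABtr], hC, hB⟩
  exact ((hABherm.padC3 c₀).add (hACherm.padB3 b₀)).sub
    ((hABherm.trSnd.padSnd b₀).padC3 c₀)

theorem hermitian_trace_one_extension
    {A B C : Type*} [Fintype A] [DecidableEq A] [Fintype B] [DecidableEq B]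
    [Fintype C] [DecidableEq C]
    (QAB : Matrix (A × B) (A × B) ℂ) (QAC : Matrix (A × C) (A × C) ℂ)
    (hABherm : QAB.IsHermitian) (hACherm : QAC.IsHermitian)
    (hABtr : QAB.trace = 1) (hACtr : QAC.trace = 1)
    (hcons : trSnd QAB = trSnd QAC) :
    ∃ QABC : Matrix (A × B × C) (A × B × C) ℂ,
      QABC.IsHermitian ∧ QABC.trace = 1 ∧ trC3 QABC = QAB ∧ trB3 QABC = QAC :=
  hermitian_trace_one_extension_general QAB QAC hABherm hACherm hABtr hACtr hcons
end
end

section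
/- Let |0⟩, |1⟩ be the standard basis of ℂ² and |±⟩ = (|0⟩ ± |1⟩)/√2. Define the two-qubit density operators ρ_AB = (1/2)(|+⟩⟨+| ⊗ |+⟩⟨+| + |−⟩⟨−| ⊗ |−⟩⟨−|) and ρ_AC = (1/2)(|0⟩⟨0| ⊗ |0⟩⟨0| + |1⟩⟨1| ⊗ |1⟩⟨1|). Then there exists no density operator w on ℂ² ⊗ ℂ² ⊗ ℂ² (factors A, B, C) whose partial trace over the third factor equals ρ_AB and whose partial trace over the second factor equals ρ_AC; i.e., these two zero-discord (classical-quantum) states are not joinable, even though their reduced states on A agree. -/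
open Matrix Kronecker
open scoped ComplexOrder

noncomputable section

/-- A density operator: positive semidefinite with trace one. -/
def IsDensity {n : Type*} [Fintype n] (M : Matrix n n ℂ) : Prop :=
  M.PosSemidef ∧ M.trace = 1

/-- The projector `|+⟩⟨+|` on a qubit. -/
def plusProj : Matrix (Fin 2) (Fin 2) ℂ := fun _ _ => 1 / 2

/-- The projector `|−⟩⟨−|` on a qubit. -/
def minusProj : Matrix (Fin 2) (Fin 2) ℂ := fun i j => (-1 : ℂ) ^ (i.val + j.val) / 2

/-- `ρ_AB = (|+⟩⟨+| ⊗ |+⟩⟨+| + |−⟩⟨−| ⊗ |−⟩⟨−|)/2`. -/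
def rhoAB : Matrix (Fin 2 × Fin 2) (Fin 2 × Fin 2) ℂ :=
  (1 / 2 : ℂ) • (plusProj ⊗ₖ plusProj + minusProj ⊗ₖ minusProj)

/-- `ρ_AC = (|00⟩⟨00| + |11⟩⟨11|)/2`. -/
def rhoAC : Matrix (Fin 2 × Fin 2) (Fin 2 × Fin 2) ℂ :=
  fun p q => if p = q ∧ p.1 = p.2 then 1 / 2 else 0

/-!
Since `ρ_AC` is supported on `|00⟩, |11⟩`, every extension `w` has zero diagonal entries at
`|a b c⟩` with `a ≠ c`, and positivity kills the whole row and column of such a basis vector.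
Each entry `w (a, b, c) (a', b', c)` with `a ≠ a'` lies in one of these rows or columns, so
tracing out `C` leaves an operator that is block diagonal in the computational basis of `A`.
But `ρ_AB` has the coherence `⟨00|ρ_AB|11⟩ = 1/4` in that basis.
-/

namespace Matrix.PosSemidef

variable {𝕜 n : Type*} [RCLike 𝕜] [Fintype n] {M : Matrix n n 𝕜}

theorem apply_eq_zero_of_diag_eq_zero_right (hM : M.PosSemidef) {i : n} (hi : M i i = 0)
    (j : n) : M j i = 0 := by
  classical
  have hcol : M *ᵥ Pi.single i 1 = 0 :=
    (hM.dotProduct_mulVec_zero_iff _).mp (by simpa [mulVec_single_one] using hi)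
  simpa [mulVec_single_one] using congrFun hcol j

theorem apply_eq_zero_of_diag_eq_zero_left (hM : M.PosSemidef) {i : n} (hi : M i i = 0)
    (j : n) : M i j = 0 := by
  rw [← hM.isHermitian.apply i j, hM.apply_eq_zero_of_diag_eq_zero_right hi j, star_zero]

theorem diag_eq_zero_of_trB3_diag_eq_zero {A B C : Type*} [Fintype B]
    {w : Matrix (A × B × C) (A × B × C) ℂ} (hw : w.PosSemidef) {a : A} {c : C}
    (h : trB3 w (a, c) (a, c) = 0) (b : B) : w (a, b, c) (a, b, c) = 0 :=
  (Finset.sum_eq_zero_iff_of_nonneg fun _ _ ↦ hw.diag_nonneg).mp h b (Finset.mem_univ b)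

end Matrix.PosSemidef

theorem trC3_apply_eq_zero_of_ne {A B : Type*} [Fintype A] [Fintype B]
    {w : Matrix (A × B × A) (A × B × A) ℂ} (hw : w.PosSemidef)
    (hAC : ∀ a c, a ≠ c → trB3 w (a, c) (a, c) = 0) {a a' : A} (haa' : a ≠ a') (b b' : B) :
    trC3 w (a, b) (a', b') = 0 := by
  refine Finset.sum_eq_zero fun c _ ↦ ?_
  by_cases hac : a = c
  · subst hac
    exact hw.apply_eq_zero_of_diag_eq_zero_right
      (hw.diag_eq_zero_of_trB3_diag_eq_zero (hAC a' a (Ne.symm haa')) b') _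
  · exact hw.apply_eq_zero_of_diag_eq_zero_left
      (hw.diag_eq_zero_of_trB3_diag_eq_zero (hAC a c hac) b) _

theorem rhoAC_apply_of_ne {a c : Fin 2} (hac : a ≠ c) : rhoAC (a, c) (a, c) = 0 := by
  simp [rhoAC, hac]

theorem rhoAB_apply_zero_zero_one_one : rhoAB (0, 0) (1, 1) = 1 / 4 := by
  norm_num [rhoAB, plusProj, minusProj, kroneckerMap_apply]

theorem classical_quantum_states_not_joinable :
    ¬ ∃ w : Matrix (Fin 2 × Fin 2 × Fin 2) (Fin 2 × Fin 2 × Fin 2) ℂ,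
        IsDensity w ∧ trC3 w = rhoAB ∧ trB3 w = rhoAC := by
  rintro ⟨w, ⟨hw, -⟩, hAB, hAC⟩
  have hblock : trC3 w (0, 0) (1, 1) = 0 :=
    trC3_apply_eq_zero_of_ne hw (fun _ _ hac ↦ hAC ▸ rhoAC_apply_of_ne hac) Fin.zero_ne_one 0 1
  rw [hAB, rhoAB_apply_zero_zero_one_one] at hblock
  norm_num at hblock
end
end

section
/- Let ρ be a density operator on H_L ⊗ H_R and let M be a channel of the form M(ρ) = Σ_i λ_i (U_i ⊗ V_i) ρ (U_i ⊗ V_i)†, where λ_i ≥ 0, Σ_i λ_i = 1, each U_i is a unitary on H_L, and each V_i is a unitary on H_R. If ρ is m-n sharable, then M(ρ) is m-n sharable. -/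
open Matrix Kronecker
open scoped ComplexOrder

noncomputable section

/-- The reduced state of `w` on the `i`-th left factor and the `j`-th right factor,
obtained as the partial trace over all the other factors. -/
def pairReduce {L R : Type*} [Fintype L] [DecidableEq L] [Fintype R] [DecidableEq R]
    {m n : ℕ} (w : Matrix ((Fin m → L) × (Fin n → R)) ((Fin m → L) × (Fin n → R)) ℂ)
    (i : Fin m) (j : Fin n) : Matrix (L × R) (L × R) ℂ :=
  fun p q => ∑ f : Fin m → L, ∑ g : Fin n → R,
    if f i = p.1 ∧ g j = p.2 then
      w (f, g) (Function.update f i q.1, Function.update g j q.2)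
    else 0

/-- `ρ` is `m`-`n` sharable if some density operator on `m` left copies and `n` right
copies reduces to `ρ` on every left-right pair. -/
def Sharable {L R : Type*} [Fintype L] [DecidableEq L] [Fintype R] [DecidableEq R]
    (m n : ℕ) (ρ : Matrix (L × R) (L × R) ℂ) : Prop :=
  ∃ w : Matrix ((Fin m → L) × (Fin n → R)) ((Fin m → L) × (Fin n → R)) ℂ,
    IsDensity w ∧ ∀ (i : Fin m) (j : Fin n), pairReduce w i j = ρ

/-!
If `w` shares `ρ`, then conjugating `w` by `U^{⊗m} ⊗ V^{⊗n}` shares `(U ⊗ V) ρ (U ⊗ V)†`: after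
splitting off the `i`-th left and `j`-th right factors this unitary is `(U ⊗ V) ⊗ W` with `W` a
unitary on the remaining factors, and the partial trace over those factors is invariant under
conjugation by `W`. As the pair reductions are linear, the corresponding convex combination of
the conjugated sharing states shares the mixture.
-/

namespace Matrix

section piKronecker

variable {κ l m n α : Type*} [Fintype κ]

def piKronecker [CommMonoid α] (A : Matrix m n α) : Matrix (κ → m) (κ → n) α :=
  of fun x y => ∏ k, A (x k) (y k)

@[simp]
theorem piKronecker_apply [CommMonoid α] (A : Matrix m n α) (x : κ → m) (y : κ → n) :
    piKronecker A x y = ∏ k, A (x k) (y k) :=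
  rfl

-- Without the explicit `κ`, `*` is elaborated before `κ` is known and falls back to the
-- default `CStarMatrix` multiplication.
theorem piKronecker_mul [CommSemiring α] [Fintype n] [DecidableEq κ]
    (A : Matrix l n α) (B : Matrix n m α) :
    piKronecker (A * B) = piKronecker (κ := κ) A * piKronecker (κ := κ) B := by
  ext x y
  simp only [piKronecker_apply, mul_apply, Fintype.prod_sum, Finset.prod_mul_distrib]

theorem piKronecker_one [CommSemiring α] [DecidableEq m] :
    piKronecker (κ := κ) (1 : Matrix m m α) = 1 := by
  ext x y
  simp only [piKronecker_apply, one_apply, Fintype.prod_boole, funext_iff]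

theorem conjTranspose_piKronecker [CommSemiring α] [StarRing α] (A : Matrix m n α) :
    (piKronecker (κ := κ) A)ᴴ = piKronecker Aᴴ := by
  ext x y
  simp only [conjTranspose_apply, piKronecker_apply, star_prod]

theorem piKronecker_mem_unitary [CommSemiring α] [StarRing α] [Fintype m] [DecidableEq m]
    [DecidableEq κ] {U : Matrix m m α} (hU : U ∈ unitary (Matrix m m α)) :
    piKronecker (κ := κ) U ∈ unitary (Matrix (κ → m) (κ → m) α) := by
  rw [Unitary.mem_iff, star_eq_conjTranspose] at hU ⊢
  rw [conjTranspose_piKronecker, ← piKronecker_mul, ← piKronecker_mul, hU.1, hU.2,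
    piKronecker_one]
  exact ⟨rfl, rfl⟩

theorem piKronecker_submatrix_funSplitAt [CommMonoid α] [DecidableEq κ] (A : Matrix m n α)
    (i : κ) :
    (piKronecker A).submatrix (Equiv.funSplitAt i m).symm (Equiv.funSplitAt i n).symm =
      A ⊗ₖ piKronecker A := by
  ext ⟨a, x⟩ ⟨b, y⟩
  simp only [submatrix_apply, piKronecker_apply, kroneckerMap_apply,
    Fintype.prod_eq_mul_prod_subtype_ne _ i]
  simp [fun k : {k // k ≠ i} => k.2]

end piKronecker

section traceRight

variable {l m m' n α : Type*} [Fintype n]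

def traceRight [Semiring α] : Matrix (m × n) (m' × n) α →ₗ[α] Matrix m m' α where
  toFun X := of fun a a' => ∑ b, X (a, b) (a', b)
  map_add' X Y := by ext; simp [Finset.sum_add_distrib]
  map_smul' c X := by ext; simp [Finset.mul_sum]

@[simp]
theorem traceRight_apply [Semiring α] (X : Matrix (m × n) (m' × n) α) (a : m) (a' : m') :
    traceRight X a a' = ∑ b, X (a, b) (a', b) :=
  rfl

theorem traceRight_kronecker_one_mul [Semiring α] [Fintype l] [DecidableEq n]
    (A : Matrix m l α) (X : Matrix (l × n) (m' × n) α) :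
    traceRight ((A ⊗ₖ (1 : Matrix n n α)) * X) = A * traceRight X := by
  ext a a'
  simp only [traceRight_apply, mul_apply, kroneckerMap_apply, Fintype.sum_prod_type, one_apply,
    mul_ite, ite_mul, mul_one, mul_zero, zero_mul, Finset.sum_ite_eq, Finset.mem_univ, if_true,
    Finset.mul_sum]
  exact Finset.sum_comm

theorem traceRight_mul_kronecker_one [Semiring α] [Fintype l] [DecidableEq n]
    (X : Matrix (m × n) (l × n) α) (A : Matrix l m' α) :
    traceRight (X * (A ⊗ₖ (1 : Matrix n n α))) = traceRight X * A := by
  ext a a'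
  simp only [traceRight_apply, mul_apply, kroneckerMap_apply, Fintype.sum_prod_type, one_apply,
    mul_ite, mul_one, mul_zero, Finset.sum_ite_eq', Finset.mem_univ, if_true, Finset.sum_mul]
  exact Finset.sum_comm

theorem traceRight_one_kronecker_mul_comm [CommSemiring α] [Fintype m] [Fintype m']
    [DecidableEq m] [DecidableEq m'] (B : Matrix n n α) (X : Matrix (m × n) (m' × n) α) :
    traceRight (((1 : Matrix m m α) ⊗ₖ B) * X) =
      traceRight (X * ((1 : Matrix m' m' α) ⊗ₖ B)) := by
  ext a a'
  simp only [traceRight_apply, mul_apply, kroneckerMap_apply, Fintype.sum_prod_type, one_apply,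
    ite_mul, mul_ite, one_mul, mul_zero, zero_mul, Finset.sum_ite_irrel, Finset.sum_const_zero,
    Finset.sum_ite_eq, Finset.sum_ite_eq', Finset.mem_univ, if_true]
  rw [Finset.sum_comm]
  simp only [mul_comm]

theorem traceRight_kronecker_conj [CommSemiring α] [StarRing α] [Fintype l] [Fintype m]
    [DecidableEq l] [DecidableEq n] (A : Matrix m l α) {B : Matrix n n α} (hB : Bᴴ * B = 1)
    (X : Matrix (l × n) (l × n) α) :
    traceRight ((A ⊗ₖ B) * X * (A ⊗ₖ B)ᴴ) = A * traceRight X * Aᴴ := by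
  have hsplit : A ⊗ₖ B = (A ⊗ₖ (1 : Matrix n n α)) * ((1 : Matrix l l α) ⊗ₖ B) := by
    rw [← mul_kronecker_mul, Matrix.mul_one, Matrix.one_mul]
  calc traceRight ((A ⊗ₖ B) * X * (A ⊗ₖ B)ᴴ)
      = traceRight ((A ⊗ₖ (1 : Matrix n n α)) * (((1 : Matrix l l α) ⊗ₖ B) *
          (X * ((1 : Matrix l l α) ⊗ₖ Bᴴ)) * (Aᴴ ⊗ₖ (1 : Matrix n n α)))) := by
        rw [hsplit, conjTranspose_mul, conjTranspose_kronecker, conjTranspose_kronecker,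
          conjTranspose_one, conjTranspose_one]
        simp only [Matrix.mul_assoc]
    _ = A * traceRight (X * (((1 : Matrix l l α) ⊗ₖ Bᴴ) * ((1 : Matrix l l α) ⊗ₖ B))) * Aᴴ := by
        rw [traceRight_kronecker_one_mul, traceRight_mul_kronecker_one,
          traceRight_one_kronecker_mul_comm, Matrix.mul_assoc X, Matrix.mul_assoc]
    _ = A * traceRight X * Aᴴ := by
        rw [← mul_kronecker_mul, hB, Matrix.one_mul, one_kronecker_one, Matrix.mul_one]

end traceRight

end Matrix

theorem Equiv.update_funSplitAt_symm {ι β : Type*} [DecidableEq ι] (i : ι) (a b : β)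
    (f : {k // k ≠ i} → β) :
    Function.update ((Equiv.funSplitAt i β).symm (a, f)) i b =
      (Equiv.funSplitAt i β).symm (b, f) := by
  ext k
  by_cases hk : k = i
  · subst hk; simp
  · simp [hk]

def pairSplitEquiv {ι ι' L R : Type*} [DecidableEq ι] [DecidableEq ι'] (i : ι) (j : ι') :
    (ι → L) × (ι' → R) ≃ (L × R) × (({k // k ≠ i} → L) × ({k // k ≠ j} → R)) :=
  ((Equiv.funSplitAt i L).prodCongr (Equiv.funSplitAt j R)).trans
    (Equiv.prodProdProdComm _ _ _ _)

theorem reindex_pairSplitEquiv_kronecker {ι ι' L R α : Type*} [Fintype ι] [Fintype ι']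
    [DecidableEq ι] [DecidableEq ι'] [CommMonoid α] (A : Matrix L L α) (B : Matrix R R α)
    (i : ι) (j : ι') :
    reindex (pairSplitEquiv i j) (pairSplitEquiv i j) (piKronecker A ⊗ₖ piKronecker B) =
      (A ⊗ₖ B) ⊗ₖ (piKronecker A ⊗ₖ piKronecker B) := by
  ext ⟨⟨a, b⟩, f, g⟩ ⟨⟨a', b'⟩, f', g'⟩
  have hA := congrFun₂ (piKronecker_submatrix_funSplitAt A i) (a, f) (a', f')
  have hB := congrFun₂ (piKronecker_submatrix_funSplitAt B j) (b, g) (b', g')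
  simp only [submatrix_apply, kroneckerMap_apply] at hA hB
  simp only [reindex_apply, submatrix_apply, kroneckerMap_apply, pairSplitEquiv,
    Equiv.symm_trans_apply, Equiv.prodProdProdComm_symm, Equiv.prodCongr_symm,
    Equiv.prodProdProdComm_apply, Equiv.prodCongr_apply, Prod.map_apply, hA, hB]
  exact mul_mul_mul_comm _ _ _ _

theorem IsDensity.conj_unitary {N : Type*} [Fintype N] [DecidableEq N] {w W : Matrix N N ℂ}
    (hw : IsDensity w) (hW : W ∈ unitary (Matrix N N ℂ)) : IsDensity (W * w * Wᴴ) :=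
  ⟨hw.1.mul_mul_conjTranspose_same W, by
    rw [trace_mul_cycle, ← star_eq_conjTranspose, Unitary.star_mul_self_of_mem hW,
      Matrix.one_mul, hw.2]⟩

theorem isDensity_sum_smul {ι N : Type*} [Fintype ι] [Fintype N] {lam : ι → ℝ}
    (hlam : ∀ k, 0 ≤ lam k) (hsum : ∑ k, lam k = 1) {w : ι → Matrix N N ℂ}
    (hw : ∀ k, IsDensity (w k)) : IsDensity (∑ k, (lam k : ℂ) • w k) := by
  refine ⟨posSemidef_sum _ fun k _ => (hw k).1.smul (Complex.zero_le_real.mpr (hlam k)), ?_⟩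
  simp only [trace_sum, trace_smul, (hw _).2, smul_eq_mul, mul_one]
  exact_mod_cast hsum

section Sharable

variable {L R : Type*} [Fintype L] [DecidableEq L] [Fintype R] [DecidableEq R] {m n : ℕ}

theorem pairReduce_eq_traceRight
    (w : Matrix ((Fin m → L) × (Fin n → R)) ((Fin m → L) × (Fin n → R)) ℂ) (i : Fin m) (j : Fin n) :
    pairReduce w i j =
      traceRight (reindexLinearEquiv ℂ ℂ (pairSplitEquiv i j) (pairSplitEquiv i j) w) := by
  ext p q
  rw [pairReduce, ← Fintype.sum_prod_type', ← (pairSplitEquiv i j).symm.sum_comp,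
    Fintype.sum_prod_type]
  simp [pairSplitEquiv, Equiv.update_funSplitAt_symm, ← Prod.ext_iff]

theorem pairReduce_sum_smul {ι : Type*} [Fintype ι] (c : ι → ℂ)
    (w : ι → Matrix ((Fin m → L) × (Fin n → R)) ((Fin m → L) × (Fin n → R)) ℂ)
    (i : Fin m) (j : Fin n) :
    pairReduce (∑ k, c k • w k) i j = ∑ k, c k • pairReduce (w k) i j := by
  simp only [pairReduce_eq_traceRight, map_sum, map_smul]

theorem pairReduce_conj_kronecker {U : Matrix L L ℂ} {V : Matrix R R ℂ}
    (hU : U ∈ unitary (Matrix L L ℂ)) (hV : V ∈ unitary (Matrix R R ℂ))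
    (w : Matrix ((Fin m → L) × (Fin n → R)) ((Fin m → L) × (Fin n → R)) ℂ)
    (i : Fin m) (j : Fin n) :
    pairReduce ((piKronecker (κ := Fin m) U ⊗ₖ piKronecker (κ := Fin n) V) * w *
      (piKronecker (κ := Fin m) U ⊗ₖ piKronecker (κ := Fin n) V)ᴴ) i j =
      (U ⊗ₖ V) * pairReduce w i j * (U ⊗ₖ V)ᴴ := by
  have hrest := kronecker_mem_unitary (piKronecker_mem_unitary (κ := {k // k ≠ i}) hU)
    (piKronecker_mem_unitary (κ := {k // k ≠ j}) hV)
  set e := pairSplitEquiv (L := L) (R := R) i j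
  rw [pairReduce_eq_traceRight, pairReduce_eq_traceRight, ← reindexLinearEquiv_mul ℂ ℂ e e e,
    ← reindexLinearEquiv_mul ℂ ℂ e e e, coe_reindexLinearEquiv,
    ← conjTranspose_reindex, reindex_pairSplitEquiv_kronecker]
  exact traceRight_kronecker_conj _ (Unitary.star_mul_self_of_mem hrest) _

theorem Sharable.sum_smul {ι : Type*} [Fintype ι] {lam : ι → ℝ} (hlam : ∀ k, 0 ≤ lam k)
    (hsum : ∑ k, lam k = 1) {ρ : ι → Matrix (L × R) (L × R) ℂ}
    (h : ∀ k, Sharable m n (ρ k)) : Sharable m n (∑ k, (lam k : ℂ) • ρ k) := by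
  choose w hw hred using h
  exact ⟨∑ k, (lam k : ℂ) • w k, isDensity_sum_smul hlam hsum hw, fun i j => by
    simp only [pairReduce_sum_smul, hred]⟩

theorem Sharable.conj_kronecker {ρ : Matrix (L × R) (L × R) ℂ} (h : Sharable m n ρ)
    {U : Matrix L L ℂ} {V : Matrix R R ℂ} (hU : U ∈ unitary (Matrix L L ℂ))
    (hV : V ∈ unitary (Matrix R R ℂ)) : Sharable m n ((U ⊗ₖ V) * ρ * (U ⊗ₖ V)ᴴ) := by
  obtain ⟨w, hw, hred⟩ := h
  refine ⟨_, hw.conj_unitary (kronecker_mem_unitary (piKronecker_mem_unitary (κ := Fin m) hU)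
    (piKronecker_mem_unitary (κ := Fin n) hV)), fun i j => ?_⟩
  rw [pairReduce_conj_kronecker hU hV, hred]

end Sharable

theorem mixture_of_local_unitaries_preserves_sharability_general
    {L R : Type*} [Fintype L] [DecidableEq L] [Fintype R] [DecidableEq R]
    {ι : Type*} [Fintype ι]
    (ρ : Matrix (L × R) (L × R) ℂ)
    (lam : ι → ℝ) (hlam : ∀ i, 0 ≤ lam i) (hsum : ∑ i, lam i = 1)
    (U : ι → Matrix.unitaryGroup L ℂ) (V : ι → Matrix.unitaryGroup R ℂ)
    (m n : ℕ) (h : Sharable m n ρ) :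
    Sharable m n (∑ i, (lam i : ℂ) •
      (((U i : Matrix L L ℂ) ⊗ₖ (V i : Matrix R R ℂ)) * ρ *
        ((U i : Matrix L L ℂ) ⊗ₖ (V i : Matrix R R ℂ))ᴴ)) :=
  Sharable.sum_smul hlam hsum fun k => h.conj_kronecker (U k).2 (V k).2

theorem mixture_of_local_unitaries_preserves_sharability
    {L R : Type*} [Fintype L] [DecidableEq L] [Fintype R] [DecidableEq R]
    {ι : Type*} [Fintype ι]
    (ρ : Matrix (L × R) (L × R) ℂ) (hρ : IsDensity ρ)
    (lam : ι → ℝ) (hlam : ∀ i, 0 ≤ lam i) (hsum : ∑ i, lam i = 1)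
    (U : ι → Matrix.unitaryGroup L ℂ) (V : ι → Matrix.unitaryGroup R ℂ)
    (m n : ℕ) (h : Sharable m n ρ) :
    Sharable m n (∑ i, (lam i : ℂ) •
      (((U i : Matrix L L ℂ) ⊗ₖ (V i : Matrix R R ℂ)) * ρ *
        ((U i : Matrix L L ℂ) ⊗ₖ (V i : Matrix R R ℂ))ᴴ)) :=
  mixture_of_local_unitaries_preserves_sharability_general ρ lam hlam hsum U V m n h
end
end

section
/- If a bipartite density operator ρ on finite-dimensional Hilbert spaces H_L ⊗ H_R is separable, then ρ is m-n sharable for every m ≥ 1 and n ≥ 1. -/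
/-!
Write `ρ = ∑ λₜ σₜ ⊗ τₜ`. The state `w = ∑ λₜ σₜ^{⊗m} ⊗ τₜ^{⊗n}` is again a convex combination of
product density operators. Tracing out all copies of `σₜ` but one, and all copies of `τₜ` but one,
multiplies `σₜ ⊗ τₜ` by powers of `tr σₜ = tr τₜ = 1`, so by linearity every pair reduction of `w`
is `ρ`.
-/

open Matrix Kronecker
open scoped ComplexOrder

noncomputable section

/-- `ρ` is separable if it is a finite convex combination of tensor products of
density operators. -/
def Separable {L R : Type*} [Fintype L] [DecidableEq L] [Fintype R] [DecidableEq R]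
    (ρ : Matrix (L × R) (L × R) ℂ) : Prop :=
  ∃ (k : ℕ) (lam : Fin k → ℝ) (σ : Fin k → Matrix L L ℂ) (τ : Fin k → Matrix R R ℂ),
    (∀ i, 0 ≤ lam i) ∧ (∑ i, lam i = 1) ∧
    (∀ i, IsDensity (σ i)) ∧ (∀ i, IsDensity (τ i)) ∧
    ρ = ∑ i, (lam i : ℂ) • (σ i ⊗ₖ τ i)

namespace Matrix

def kroneckerPow {a b R : Type*} (ι : Type*) [Fintype ι] [CommMonoid R] (A : Matrix a b R) :
    Matrix (ι → a) (ι → b) R :=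
  fun f g => ∏ i, A (f i) (g i)

variable {ι a b c R : Type*} [Fintype ι]

theorem kroneckerPow_mul [CommSemiring R] [Fintype b] [DecidableEq ι]
    (A : Matrix a b R) (B : Matrix b c R) :
    kroneckerPow ι (A * B) = kroneckerPow ι A * kroneckerPow ι B := by
  ext f g
  simp only [kroneckerPow, mul_apply, Fintype.prod_sum, Finset.prod_mul_distrib]

theorem kroneckerPow_conjTranspose [CommSemiring R] [StarRing R] (A : Matrix a b R) :
    kroneckerPow ι Aᴴ = (kroneckerPow ι A)ᴴ := by
  ext f g
  simp only [kroneckerPow, conjTranspose_apply, star_prod]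

theorem trace_kroneckerPow [CommSemiring R] [Fintype a] [DecidableEq ι] (A : Matrix a a R) :
    (kroneckerPow ι A).trace = A.trace ^ Fintype.card ι := by
  rw [trace, ← Finset.card_univ, ← Finset.prod_const, trace, Fintype.prod_sum]
  rfl

open scoped MatrixOrder in
theorem PosSemidef.kroneckerPow {𝕜 : Type*} [RCLike 𝕜] [Fintype a] [DecidableEq ι]
    {A : Matrix a a 𝕜} (hA : A.PosSemidef) : (kroneckerPow ι A).PosSemidef := by
  classical
  obtain ⟨B, rfl⟩ := CStarAlgebra.nonneg_iff_eq_star_mul_self.mp hA.nonneg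
  rw [star_eq_conjTranspose, kroneckerPow_mul, kroneckerPow_conjTranspose]
  exact posSemidef_conjTranspose_mul_self _

section reduceAt

variable [DecidableEq ι] [Fintype a] [DecidableEq a]

def reduceAt [AddCommMonoid R] (M : Matrix (ι → a) (ι → a) R) (i : ι) : Matrix a a R :=
  fun p q => ∑ f : ι → a, if f i = p then M f (Function.update f i q) else 0

theorem reduceAt_kroneckerPow [CommSemiring R] (A : Matrix a a R) (i : ι) :
    reduceAt (kroneckerPow ι A) i = A.trace ^ (Fintype.card ι - 1) • A := by
  ext p q
  let F : ι → a → R := fun j x => if j = i then (if x = p then A x q else 0) else A x x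
  have hterm (f : ι → a) :
      (if f i = p then kroneckerPow ι A f (Function.update f i q) else 0) = ∏ j, F j (f j) := by
    by_cases hf : f i = p
    · rw [if_pos hf]
      refine Finset.prod_congr rfl fun j _ => ?_
      by_cases hj : j = i
      · subst hj; simp [F, hf]
      · simp [F, hj]
    · rw [if_neg hf]
      exact (Finset.prod_eq_zero (Finset.mem_univ i) (by simp [F, hf])).symm
  have hcompl : ∏ j ∈ {i}ᶜ, ∑ x, F j x = A.trace ^ (Fintype.card ι - 1) := by
    have hne (j) (hj : j ∈ ({i}ᶜ : Finset ι)) : ∑ x, F j x = A.trace := by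
      simp [F, trace, (by simpa using hj : j ≠ i)]
    rw [Finset.prod_congr rfl hne, Finset.prod_const, Finset.card_compl, Finset.card_singleton]
  simp only [reduceAt, hterm]
  rw [← Fintype.prod_sum, Fintype.prod_eq_mul_prod_compl i, hcompl]
  simp [F, mul_comm]

end reduceAt

end Matrix

theorem IsDensity.kronecker {a b : Type*} [Fintype a] [Fintype b] {A : Matrix a a ℂ}
    {B : Matrix b b ℂ} (hA : IsDensity A) (hB : IsDensity B) : IsDensity (A ⊗ₖ B) :=
  ⟨hA.1.kronecker hB.1, by rw [trace_kronecker, hA.2, hB.2, one_mul]⟩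

theorem IsDensity.kroneckerPow {ι a : Type*} [Fintype ι] [DecidableEq ι] [Fintype a]
    {A : Matrix a a ℂ} (hA : IsDensity A) : IsDensity (kroneckerPow ι A) :=
  ⟨hA.1.kroneckerPow, by rw [trace_kroneckerPow, hA.2, one_pow]⟩

theorem IsDensity.sum_smul {ι a : Type*} [Fintype a] {s : Finset ι} {c : ι → ℝ}
    {ρ : ι → Matrix a a ℂ} (hc : ∀ t ∈ s, 0 ≤ c t) (hsum : ∑ t ∈ s, c t = 1)
    (hρ : ∀ t ∈ s, IsDensity (ρ t)) : IsDensity (∑ t ∈ s, (c t : ℂ) • ρ t) := by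
  refine ⟨posSemidef_sum s fun t ht => (hρ t ht).1.smul (Complex.zero_le_real.mpr (hc t ht)), ?_⟩
  have htrace (t) (ht : t ∈ s) : ((c t : ℂ) • ρ t).trace = c t := by
    rw [trace_smul, (hρ t ht).2, smul_eq_mul, mul_one]
  rw [trace_sum, Finset.sum_congr rfl htrace, ← Complex.ofReal_sum, hsum, Complex.ofReal_one]

section pairReduce

variable {L R : Type*} [Fintype L] [DecidableEq L] [Fintype R] [DecidableEq R] {m n : ℕ}
  (i : Fin m) (j : Fin n)

theorem pairReduce_sum {ι : Type*} (s : Finset ι)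
    (w : ι → Matrix ((Fin m → L) × (Fin n → R)) ((Fin m → L) × (Fin n → R)) ℂ) :
    pairReduce (∑ t ∈ s, w t) i j = ∑ t ∈ s, pairReduce (w t) i j := by
  ext p q
  simp only [pairReduce, Matrix.sum_apply, Finset.ite_sum_zero]
  exact (Finset.sum_congr rfl fun f _ => Finset.sum_comm).trans Finset.sum_comm

theorem pairReduce_smul (c : ℂ)
    (w : Matrix ((Fin m → L) × (Fin n → R)) ((Fin m → L) × (Fin n → R)) ℂ) :
    pairReduce (c • w) i j = c • pairReduce w i j := by
  ext p q
  simp only [pairReduce, Matrix.smul_apply, smul_eq_mul, Finset.mul_sum, mul_ite, mul_zero]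

theorem pairReduce_kronecker (A : Matrix (Fin m → L) (Fin m → L) ℂ)
    (B : Matrix (Fin n → R) (Fin n → R) ℂ) :
    pairReduce (A ⊗ₖ B) i j = reduceAt A i ⊗ₖ reduceAt B j := by
  ext ⟨p₁, p₂⟩ ⟨q₁, q₂⟩
  simp only [pairReduce, reduceAt, kroneckerMap_apply, Finset.sum_mul_sum, ite_zero_mul_ite_zero]

end pairReduce

theorem separable_implies_sharable_general
    {L R : Type*} [Fintype L] [DecidableEq L] [Fintype R] [DecidableEq R]
    (ρ : Matrix (L × R) (L × R) ℂ) (hsep : Separable ρ)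
    (m n : ℕ) :
    Sharable m n ρ := by
  obtain ⟨k, lam, σ, τ, hlam, hsum, hσ, hτ, rfl⟩ := hsep
  refine ⟨∑ t, (lam t : ℂ) • (kroneckerPow (Fin m) (σ t) ⊗ₖ kroneckerPow (Fin n) (τ t)),
    .sum_smul (fun t _ => hlam t) hsum fun t _ => (hσ t).kroneckerPow.kronecker (hτ t).kroneckerPow,
    fun i j => ?_⟩
  rw [pairReduce_sum]
  refine Finset.sum_congr rfl fun t _ => ?_
  rw [pairReduce_smul, pairReduce_kronecker, reduceAt_kroneckerPow, reduceAt_kroneckerPow, (hσ t).2,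
    (hτ t).2, one_pow, one_pow, one_smul, one_smul]

theorem separable_implies_sharable
    {L R : Type*} [Fintype L] [DecidableEq L] [Fintype R] [DecidableEq R]
    (ρ : Matrix (L × R) (L × R) ℂ) (hρ : IsDensity ρ) (hsep : Separable ρ)
    (m n : ℕ) (hm : 1 ≤ m) (hn : 1 ≤ n) :
    Sharable m n ρ :=
  separable_implies_sharable_general ρ hsep m n
end
end

section
/- Let d = 2 and Ψ_AB, Ψ_AC, Ψ_BC ∈ [−1,1]. There exists a density operator w on ℂ² ⊗ ℂ² ⊗ ℂ² (factors A, B, C) whose reduced states on the pairs A-B, A-C, B-C are the qubit Werner states ρ_W(Ψ_AB), ρ_W(Ψ_AC), ρ_W(Ψ_BC) respectively, if and only if 1 − Ψ̄ ≥ (2/3)·|Ψ_BC + ω·Ψ_AC + ω²·Ψ_AB| and Ψ̄ ≥ 0, where Ψ̄ = (Ψ_AB + Ψ_AC + Ψ_BC)/3, ω = e^{2πi/3}, and |·| is the complex modulus. -/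
open Matrix
open scoped ComplexOrder

noncomputable section

/-- Partial trace of a tripartite operator over the first factor (reduced state on B-C). -/
def trA3 {A B C : Type*} [Fintype A] (w : Matrix (A × B × C) (A × B × C) ℂ) :
    Matrix (B × C) (B × C) ℂ :=
  fun p q => ∑ a : A, w (a, p.1, p.2) (a, q.1, q.2)

/-- The swap operator `V` on `ℂ^d ⊗ ℂ^d`, `V(ψ ⊗ φ) = φ ⊗ ψ`. -/
def swapOp (d : ℕ) : Matrix (Fin d × Fin d) (Fin d × Fin d) ℂ :=
  fun p q => if p.1 = q.2 ∧ p.2 = q.1 then 1 else 0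

/-- The qudit Werner state with parameter `Ψ`:
`ρ_W(Ψ) = (d/(d²−1))·[(d−Ψ)·I/d² + (Ψ − 1/d)·V/d]`. -/
def wernerState (d : ℕ) (Ψ : ℝ) : Matrix (Fin d × Fin d) (Fin d × Fin d) ℂ :=
  ((d : ℂ) / ((d : ℂ) ^ 2 - 1)) •
    ((((d : ℂ) - (Ψ : ℂ)) / (d : ℂ) ^ 2) • (1 : Matrix (Fin d × Fin d) (Fin d × Fin d) ℂ) +
      (((Ψ : ℂ) - 1 / (d : ℂ)) / (d : ℂ)) • swapOp d)

/-- The projector `|Φ⁺⟩⟨Φ⁺|` onto the maximally entangled state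
`|Φ⁺⟩ = (1/√d)·Σᵢ |i⟩⊗|i⟩`. -/
def phiPlusProj (d : ℕ) : Matrix (Fin d × Fin d) (Fin d × Fin d) ℂ :=
  fun p q => if p.1 = p.2 ∧ q.1 = q.2 then 1 / (d : ℂ) else 0

/-- The qudit isotropic state with parameter `Φ`:
`ρ_I(Φ) = (d/(d²−1))·[(d−Φ)·I/d² + (Φ − 1/d)·|Φ⁺⟩⟨Φ⁺|]`. -/
def isoState (d : ℕ) (Φ : ℝ) : Matrix (Fin d × Fin d) (Fin d × Fin d) ℂ :=
  ((d : ℂ) / ((d : ℂ) ^ 2 - 1)) •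
    ((((d : ℂ) - (Φ : ℂ)) / (d : ℂ) ^ 2) • (1 : Matrix (Fin d × Fin d) (Fin d × Fin d) ℂ) +
      ((Φ : ℂ) - 1 / (d : ℂ)) • phiPlusProj d)

/-!
Write `V_BC, V_AC, V_AB` for the transpositions of three qubits and `S` for their sum. Any three
qubit labels contain two equal ones, so the antisymmetrizer vanishes and
`V_i V_j + V_j V_i = S - 1` for `i ≠ j`. Hence `S/3` and `1 - S/3` are complementary projections,
and for `∑ t = 0` the operator `T = ∑ t V` satisfies `T² = |t_BC + ω t_AC + ω² t_AB|² (1 - S/3)`.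
It follows that `x + ∑ a V` is positive semidefinite as soon as `x + ∑ a ≥ 0` and
`x ≥ |a_BC + ω a_AC + ω² a_AB|`.

Since `tr (ρ_W(Ψ) V) = Ψ`, a joint state `w` gives `0 ≤ tr (w (x + ∑ a V)) = x + ∑ a Ψ` for each
such operator. With `z = Ψ_BC + ω Ψ_AC + ω² Ψ_AB`, the choices `S/3`, `1 - S/3` and
`|z| (1 - S/3) - ∑ (Ψ - Ψ̄) V` yield `Ψ̄ ≥ 0`, `Ψ̄ ≤ 1` and `(2/3) |z|² ≤ (1 - Ψ̄) |z|`.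
Conversely, the combination `x + ∑ a V` with the prescribed Werner marginals is positive
semidefinite under the two conditions.
-/

section Swaps

variable {α : Type*}

def swapAB : Equiv.Perm (α × α × α) :=
  Function.Involutive.toPerm (fun p => (p.2.1, p.1, p.2.2)) fun _ => rfl

def swapAC : Equiv.Perm (α × α × α) :=
  Function.Involutive.toPerm (fun p => (p.2.2, p.2.1, p.1)) fun _ => rfl

def swapBC : Equiv.Perm (α × α × α) :=
  Function.Involutive.toPerm (fun p => (p.1, p.2.2, p.2.1)) fun _ => rfl

@[simp] theorem swapAB_apply (a b c : α) : swapAB (a, b, c) = (b, a, c) := rfl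

@[simp] theorem swapAC_apply (a b c : α) : swapAC (a, b, c) = (c, b, a) := rfl

@[simp] theorem swapBC_apply (a b c : α) : swapBC (a, b, c) = (a, c, b) := rfl

theorem swapAB_inv : (swapAB⁻¹ : Equiv.Perm (α × α × α)) = swapAB := rfl

theorem swapAC_inv : (swapAC⁻¹ : Equiv.Perm (α × α × α)) = swapAC := rfl

theorem swapBC_inv : (swapBC⁻¹ : Equiv.Perm (α × α × α)) = swapBC := rfl

theorem swapBC_mul_swapAC : (swapBC * swapAC : Equiv.Perm (α × α × α)) = swapAB * swapBC := rfl

theorem swapAC_mul_swapAB : (swapAC * swapAB : Equiv.Perm (α × α × α)) = swapAB * swapBC := rfl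

theorem swapAB_mul_swapAC : (swapAB * swapAC : Equiv.Perm (α × α × α)) = swapBC * swapAB := rfl

theorem swapAC_mul_swapBC : (swapAC * swapBC : Equiv.Perm (α × α × α)) = swapBC * swapAB := rfl

end Swaps

theorem Matrix.permMatrix_mul_self_of_involutive {n R : Type*} [DecidableEq n] [Fintype n]
    [NonAssocSemiring R] (σ : Equiv.Perm n) (hσ : Function.Involutive σ) :
    σ.permMatrix R * σ.permMatrix R = 1 := by
  rw [← permMatrix_mul, show σ * σ = 1 from Equiv.ext hσ, permMatrix_one]

theorem Matrix.trace_mul_permMatrix {n R : Type*} [DecidableEq n] [Fintype n]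
    [NonAssocSemiring R] (M : Matrix n n R) (σ : Equiv.Perm n) :
    (M * σ.permMatrix R).trace = ∑ i, M i (σ.symm i) := by
  simp [Matrix.trace, Matrix.mul_apply, PEquiv.toMatrix_apply, ← Equiv.eq_symm_apply]

theorem Matrix.posSemidef_of_mul_self_eq_smul {n 𝕜 : Type*} [Fintype n] [RCLike 𝕜]
    {X : Matrix n n 𝕜} (hX : X.IsHermitian) {c : ℝ} (hc : 0 ≤ c) (hXX : X * X = c • X) :
    X.PosSemidef := by
  rcases hc.eq_or_lt with rfl | hc
  · have : Xᴴ * X = 0 := by rw [hX.eq, hXX, zero_smul]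
    rw [conjTranspose_mul_self_eq_zero.mp this]
    exact .zero
  · have : X = c⁻¹ • (Xᴴ * X) := by
      rw [hX.eq, hXX, smul_smul, inv_mul_cancel₀ hc.ne', one_smul]
    rw [this]
    exact (posSemidef_conjTranspose_mul_self X).smul (inv_nonneg.mpr hc.le)

theorem Matrix.PosSemidef.trace_mul_nonneg {n 𝕜 : Type*} [Fintype n] [RCLike 𝕜]
    {A B : Matrix n n 𝕜} (hA : A.PosSemidef) (hB : B.PosSemidef) : 0 ≤ (A * B).trace := by
  classical
  open scoped MatrixOrder in
  obtain ⟨C, rfl⟩ := CStarAlgebra.nonneg_iff_eq_star_mul_self.mp hB.nonneg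
  rw [star_eq_conjTranspose, ← Matrix.mul_assoc, trace_mul_cycle]
  exact (hA.mul_mul_conjTranspose_same C).trace_nonneg

/-- The antisymmetrizer `∑ sign σ • P σ` vanishes on three qubits: the transposition exchanging
two equal entries of a label pairs off the even and odd permutations sending it to a given label. -/
theorem permMatrix_threeCycle_add_inv_qubit :
    (swapAB * swapBC).permMatrix ℂ + (swapBC * swapAB).permMatrix ℂ =
      swapBC.permMatrix ℂ + swapAC.permMatrix ℂ + swapAB.permMatrix ℂ -
        (1 : Matrix (Fin 2 × Fin 2 × Fin 2) _ ℂ) := by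
  have hcount : ∀ p q : Fin 2 × Fin 2 × Fin 2,
      ((if p = q then 1 else 0) + ((if swapAB (swapBC p) = q then 1 else 0)
        + (if swapBC (swapAB p) = q then 1 else 0)) : ℕ) =
      (if swapBC p = q then 1 else 0) + (if swapAC p = q then 1 else 0)
        + (if swapAB p = q then 1 else 0) := by decide
  rw [eq_sub_iff_add_eq']
  ext p q
  have := congrArg (Nat.cast : ℕ → ℂ) (hcount p q)
  push_cast at this
  simpa [PEquiv.toMatrix_apply, Matrix.one_apply, -Matrix.permMatrix_mul] using this

def transpComb (d : ℕ) (x aBC aAC aAB : ℝ) :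
    Matrix (Fin d × Fin d × Fin d) (Fin d × Fin d × Fin d) ℂ :=
  x • 1 + aBC • swapBC.permMatrix ℂ + aAC • swapAC.permMatrix ℂ + aAB • swapAB.permMatrix ℂ

theorem transpComb_isHermitian (d : ℕ) (x a b c : ℝ) : (transpComb d x a b c).IsHermitian := by
  simp [Matrix.IsHermitian, transpComb, Matrix.conjTranspose_add, Matrix.conjTranspose_smul,
    swapAB_inv, swapAC_inv, swapBC_inv]

theorem transpComb_mul_self (x a b c : ℝ) :
    transpComb 2 x a b c * transpComb 2 x a b c =
      transpComb 2 (x ^ 2 + a ^ 2 + b ^ 2 + c ^ 2 - (a * b + a * c + b * c))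
        (2 * x * a + (a * b + a * c + b * c)) (2 * x * b + (a * b + a * c + b * c))
        (2 * x * c + (a * b + a * c + b * c)) := by
  have hinv (σ : Equiv.Perm (Fin 2 × Fin 2 × Fin 2)) (hσ : Function.Involutive σ) :=
    Matrix.permMatrix_mul_self_of_involutive (R := ℂ) σ hσ
  simp only [transpComb, add_mul, mul_add, smul_mul_smul_comm, mul_one, one_mul,
    hinv swapAB (fun _ => rfl), hinv swapAC (fun _ => rfl), hinv swapBC (fun _ => rfl),
    ← Matrix.permMatrix_mul, swapBC_mul_swapAC, swapAC_mul_swapAB, swapAB_mul_swapAC,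
    swapAC_mul_swapBC]
  rw [eq_sub_of_add_eq permMatrix_threeCycle_add_inv_qubit]
  module

theorem transpComb_posSemidef_of_mul_self_eq_smul {x a b c k : ℝ} (hk : 0 ≤ k)
    (hx : x ^ 2 + a ^ 2 + b ^ 2 + c ^ 2 - (a * b + a * c + b * c) = k * x)
    (ha : 2 * x * a + (a * b + a * c + b * c) = k * a)
    (hb : 2 * x * b + (a * b + a * c + b * c) = k * b)
    (hc : 2 * x * c + (a * b + a * c + b * c) = k * c) :
    (transpComb 2 x a b c).PosSemidef := by
  refine Matrix.posSemidef_of_mul_self_eq_smul (transpComb_isHermitian 2 x a b c) hk ?_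
  rw [transpComb_mul_self, hx, ha, hb, hc]
  simp only [transpComb, smul_add, mul_smul]

/-- The summands are nonnegative multiples of the projections `S/3` and `1 - S/3` and the operator
`r (1 - S/3) + ∑ (a - m) V`, whose square is `2r` times itself. -/
theorem transpComb_posSemidef {x a b c r : ℝ} (hsym : 0 ≤ x + a + b + c) (hr : 0 ≤ r)
    (hr2 : r ^ 2 = a ^ 2 + b ^ 2 + c ^ 2 - (a * b + a * c + b * c)) (hmix : r ≤ x) :
    (transpComb 2 x a b c).PosSemidef := by
  set m := (a + b + c) / 3
  have hdecomp : transpComb 2 x a b c =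
      (x + a + b + c) • transpComb 2 0 (1 / 3) (1 / 3) (1 / 3) +
        (x - r) • transpComb 2 1 (-1 / 3) (-1 / 3) (-1 / 3) +
          transpComb 2 r (a - m - r / 3) (b - m - r / 3) (c - m - r / 3) := by
    simp only [transpComb, m]
    module
  have hsymProj : (transpComb 2 0 (1 / 3) (1 / 3) (1 / 3)).PosSemidef :=
    transpComb_posSemidef_of_mul_self_eq_smul zero_le_one (by ring) (by ring) (by ring) (by ring)
  have hmixProj : (transpComb 2 1 (-1 / 3) (-1 / 3) (-1 / 3)).PosSemidef :=
    transpComb_posSemidef_of_mul_self_eq_smul zero_le_one (by ring) (by ring) (by ring) (by ring)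
  have hmixPart : (transpComb 2 r (a - m - r / 3) (b - m - r / 3) (c - m - r / 3)).PosSemidef :=
    transpComb_posSemidef_of_mul_self_eq_smul (k := 2 * r) (by positivity)
      (by simp only [m]; linear_combination (-1) * hr2)
      (by simp only [m]; linear_combination (1 / 3) * hr2)
      (by simp only [m]; linear_combination (1 / 3) * hr2)
      (by simp only [m]; linear_combination (1 / 3) * hr2)
  rw [hdecomp]
  exact ((hsymProj.smul hsym).add (hmixProj.smul (sub_nonneg.mpr hmix))).add hmixPart

theorem swapOp_eq_permMatrix (d : ℕ) :
    swapOp d = Equiv.Perm.permMatrix ℂ (Equiv.prodComm (Fin d) (Fin d)) := by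
  ext p q
  simp [swapOp, Prod.ext_iff, eq_comm, and_comm]

theorem swapOp_mul_self (d : ℕ) : swapOp d * swapOp d = 1 := by
  rw [swapOp_eq_permMatrix]
  exact Matrix.permMatrix_mul_self_of_involutive _ fun _ => rfl

theorem trace_swapOp (d : ℕ) : (swapOp d).trace = d := by
  have hdiag (a b : Fin d) : swapOp d (a, b) (a, b) = if a = b then 1 else 0 := by
    simp [swapOp, eq_comm]
  rw [Matrix.trace, Fintype.sum_prod_type]
  simp [hdiag]

theorem trace_wernerState_mul_swapOp {d : ℕ} (hd : 2 ≤ d) (Ψ : ℝ) :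
    (wernerState d Ψ * swapOp d).trace = Ψ := by
  have hd0 : (d : ℂ) ≠ 0 := by norm_cast; omega
  have hd1 : (d : ℂ) ^ 2 - 1 ≠ 0 := by
    rw [sub_ne_zero]; norm_cast; nlinarith
  simp only [wernerState, Matrix.smul_mul, Matrix.add_mul, Matrix.one_mul, swapOp_mul_self,
    Matrix.trace_smul, Matrix.trace_add, trace_swapOp, Matrix.trace_one, Fintype.card_prod,
    Fintype.card_fin, smul_eq_mul]
  push_cast
  field_simp
  ring

theorem trace_wernerState {d : ℕ} (hd : 2 ≤ d) (Ψ : ℝ) : (wernerState d Ψ).trace = 1 := by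
  have hd0 : (d : ℂ) ≠ 0 := by norm_cast; omega
  have hd1 : (d : ℂ) ^ 2 - 1 ≠ 0 := by
    rw [sub_ne_zero]; norm_cast; nlinarith
  simp only [wernerState, Matrix.trace_smul, Matrix.trace_add, trace_swapOp, Matrix.trace_one,
    Fintype.card_prod, Fintype.card_fin, smul_eq_mul]
  push_cast
  field_simp
  ring

theorem wernerState_two (Ψ : ℝ) :
    wernerState 2 Ψ =
      ((2 - Ψ) / 6 : ℝ) • (1 : Matrix _ _ ℂ) + ((2 * Ψ - 1) / 6 : ℝ) • swapOp 2 := by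
  unfold wernerState
  match_scalars <;> simp <;> ring

section PartialTrace

variable {d : ℕ} (w : Matrix (Fin d × Fin d × Fin d) (Fin d × Fin d × Fin d) ℂ)

theorem trace_mul_swapOp (M : Matrix (Fin d × Fin d) (Fin d × Fin d) ℂ) :
    (M * swapOp d).trace = ∑ a, ∑ b, M (a, b) (b, a) := by
  rw [swapOp_eq_permMatrix, Matrix.trace_mul_permMatrix, Fintype.sum_prod_type]
  rfl

theorem trace_mul_permMatrix_swapBC :
    (w * swapBC.permMatrix ℂ).trace = (trA3 w * swapOp d).trace := by
  rw [Matrix.trace_mul_permMatrix, trace_mul_swapOp, Fintype.sum_prod_type, Finset.sum_comm]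
  simp only [trA3, Fintype.sum_prod_type]
  rfl

theorem trace_mul_permMatrix_swapAC :
    (w * swapAC.permMatrix ℂ).trace = (trB3 w * swapOp d).trace := by
  rw [Matrix.trace_mul_permMatrix, trace_mul_swapOp, Fintype.sum_prod_type]
  simp only [trB3, Fintype.sum_prod_type]
  exact Finset.sum_congr rfl fun _ _ => Finset.sum_comm

theorem trace_mul_permMatrix_swapAB :
    (w * swapAB.permMatrix ℂ).trace = (trC3 w * swapOp d).trace := by
  rw [Matrix.trace_mul_permMatrix, trace_mul_swapOp, Fintype.sum_prod_type]
  simp only [trC3, Fintype.sum_prod_type]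
  rfl

theorem trace_trA3 : (trA3 w).trace = w.trace := by
  simp only [Matrix.trace, Matrix.diag, trA3, Fintype.sum_prod_type]
  exact (Finset.sum_congr rfl fun _ _ => Finset.sum_comm).trans Finset.sum_comm

theorem trace_mul_transpComb (x aBC aAC aAB : ℝ) :
    (w * transpComb d x aBC aAC aAB).trace =
      x * w.trace + aBC * (trA3 w * swapOp d).trace + aAC * (trB3 w * swapOp d).trace +
        aAB * (trC3 w * swapOp d).trace := by
  simp only [transpComb, Matrix.mul_add, Matrix.mul_smul, Matrix.mul_one, Matrix.trace_add,
    Matrix.trace_smul, trace_mul_permMatrix_swapBC, trace_mul_permMatrix_swapAC,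
    trace_mul_permMatrix_swapAB, Complex.real_smul]

theorem trA3_transpComb (x aBC aAC aAB : ℝ) :
    trA3 (transpComb d x aBC aAC aAB) =
      (d * x + aAC + aAB) • (1 : Matrix _ _ ℂ) + (d * aBC) • swapOp d := by
  ext ⟨b, c⟩ ⟨b', c'⟩
  simp [trA3, transpComb, swapOp, Matrix.one_apply, Finset.sum_add_distrib, Prod.ext_iff,
    ite_and]
  split_ifs <;> simp_all; ring

theorem trB3_transpComb (x aBC aAC aAB : ℝ) :
    trB3 (transpComb d x aBC aAC aAB) =
      (d * x + aBC + aAB) • (1 : Matrix _ _ ℂ) + (d * aAC) • swapOp d := by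
  ext ⟨a, c⟩ ⟨a', c'⟩
  simp [trB3, transpComb, swapOp, Matrix.one_apply, Finset.sum_add_distrib, Prod.ext_iff,
    ite_and]
  split_ifs <;> simp_all; ring

theorem trC3_transpComb (x aBC aAC aAB : ℝ) :
    trC3 (transpComb d x aBC aAC aAB) =
      (d * x + aBC + aAC) • (1 : Matrix _ _ ℂ) + (d * aAB) • swapOp d := by
  ext ⟨a, b⟩ ⟨a', b'⟩
  simp [trC3, transpComb, swapOp, Matrix.one_apply, Finset.sum_add_distrib, Prod.ext_iff,
    ite_and]
  split_ifs <;> simp_all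

end PartialTrace

local notation "ω" => Complex.exp (2 * Real.pi * Complex.I / 3)

theorem sq_norm_add_cubeRoot_mul (a b c : ℝ) :
    ‖(a : ℂ) + ω * b + ω ^ 2 * c‖ ^ 2 = a ^ 2 + b ^ 2 + c ^ 2 - (a * b + a * c + b * c) := by
  have hprim : IsPrimitiveRoot ω 3 := by
    simpa using Complex.isPrimitiveRoot_exp 3 (by norm_num)
  have hcube : ω ^ 3 = 1 := hprim.pow_eq_one
  have hsum : 1 + ω + ω ^ 2 = 0 := by
    simpa [Finset.sum_range_succ] using hprim.geom_sum_eq_zero (by norm_num)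
  have hconj : (starRingEnd ℂ) ω = ω ^ 2 := by
    rw [← Complex.inv_eq_conj (hprim.norm'_eq_one (by norm_num))]
    exact inv_eq_of_mul_eq_one_right (by rw [← pow_succ']; exact hcube)
  apply Complex.ofReal_injective
  rw [Complex.ofReal_pow, ← Complex.mul_conj']
  simp only [map_add, map_mul, map_pow, Complex.conj_ofReal, hconj]
  push_cast
  linear_combination (a * b + a * c + b * c) * hsum +
    (a * ω * c + b ^ 2 + c ^ 2 * (ω ^ 3 + 1) + ω * b * c + ω ^ 2 * b * c) * hcube

section Joinability

variable {ΨAB ΨAC ΨBC : ℝ}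

theorem witness_nonneg_of_marginals {w : Matrix (Fin 2 × Fin 2 × Fin 2) (Fin 2 × Fin 2 × Fin 2) ℂ}
    (hw : IsDensity w) (hC : trC3 w = wernerState 2 ΨAB) (hB : trB3 w = wernerState 2 ΨAC)
    (hA : trA3 w = wernerState 2 ΨBC) {x a b c r : ℝ} (hsym : 0 ≤ x + a + b + c) (hr : 0 ≤ r)
    (hr2 : r ^ 2 = a ^ 2 + b ^ 2 + c ^ 2 - (a * b + a * c + b * c)) (hmix : r ≤ x) :
    0 ≤ x + a * ΨBC + b * ΨAC + c * ΨAB := by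
  have h := hw.1.trace_mul_nonneg (transpComb_posSemidef hsym hr hr2 hmix)
  rw [trace_mul_transpComb, hw.2, hA, hB, hC, trace_wernerState_mul_swapOp le_rfl,
    trace_wernerState_mul_swapOp le_rfl, trace_wernerState_mul_swapOp le_rfl] at h
  exact_mod_cast (by simpa using h : (0 : ℂ) ≤ ((x + a * ΨBC + b * ΨAC + c * ΨAB : ℝ) : ℂ))

theorem joinability_conditions_of_marginals
    {w : Matrix (Fin 2 × Fin 2 × Fin 2) (Fin 2 × Fin 2 × Fin 2) ℂ}
    (hw : IsDensity w) (hC : trC3 w = wernerState 2 ΨAB) (hB : trB3 w = wernerState 2 ΨAC)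
    (hA : trA3 w = wernerState 2 ΨBC) :
    2 / 3 * ‖(ΨBC : ℂ) + ω * ΨAC + ω ^ 2 * ΨAB‖ ≤ 1 - (ΨAB + ΨAC + ΨBC) / 3 ∧
      0 ≤ (ΨAB + ΨAC + ΨBC) / 3 := by
  set r := ‖(ΨBC : ℂ) + ω * ΨAC + ω ^ 2 * ΨAB‖
  set p := (ΨAB + ΨAC + ΨBC) / 3
  have hr2 : r ^ 2 = _ := sq_norm_add_cubeRoot_mul ΨBC ΨAC ΨAB
  have hsym := witness_nonneg_of_marginals hw hC hB hA (x := 0) (a := 1 / 3) (b := 1 / 3)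
    (c := 1 / 3) (r := 0) (by norm_num) le_rfl (by ring) le_rfl
  have hmix := witness_nonneg_of_marginals hw hC hB hA (x := 1) (a := -1 / 3) (b := -1 / 3)
    (c := -1 / 3) (r := 0) (by norm_num) le_rfl (by ring) zero_le_one
  have hdev := witness_nonneg_of_marginals hw hC hB hA (x := r) (a := p - ΨBC - r / 3)
    (b := p - ΨAC - r / 3) (c := p - ΨAB - r / 3) (r := r) (by simp only [p]; linarith)
    (norm_nonneg _) (by simp only [p]; linear_combination hr2) le_rfl
  have hdev' : 2 / 3 * r ^ 2 ≤ r * (1 - p) := by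
    simp only [p] at hdev ⊢; linarith
  have hp : 3 * p = ΨAB + ΨAC + ΨBC := by simp only [p]; ring
  constructor
  · nlinarith [norm_nonneg ((ΨBC : ℂ) + ω * ΨAC + ω ^ 2 * ΨAB)]
  · linarith

/-- The unique combination `x + ∑ a V` with these three Werner marginals. -/
def wernerJoint (ΨAB ΨAC ΨBC : ℝ) : Matrix (Fin 2 × Fin 2 × Fin 2) (Fin 2 × Fin 2 × Fin 2) ℂ :=
  transpComb 2 ((1 - (ΨAB + ΨAC + ΨBC) / 3) / 4)
    ((2 * ΨBC - 1) / 12) ((2 * ΨAC - 1) / 12) ((2 * ΨAB - 1) / 12)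

theorem trC3_wernerJoint : trC3 (wernerJoint ΨAB ΨAC ΨBC) = wernerState 2 ΨAB := by
  rw [wernerJoint, trC3_transpComb, wernerState_two]
  congr 2 <;> push_cast <;> ring

theorem trB3_wernerJoint : trB3 (wernerJoint ΨAB ΨAC ΨBC) = wernerState 2 ΨAC := by
  rw [wernerJoint, trB3_transpComb, wernerState_two]
  congr 2 <;> push_cast <;> ring

theorem trA3_wernerJoint : trA3 (wernerJoint ΨAB ΨAC ΨBC) = wernerState 2 ΨBC := by
  rw [wernerJoint, trA3_transpComb, wernerState_two]
  congr 2 <;> push_cast <;> ring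

theorem isDensity_wernerJoint
    (hmix : 2 / 3 * ‖(ΨBC : ℂ) + ω * ΨAC + ω ^ 2 * ΨAB‖ ≤ 1 - (ΨAB + ΨAC + ΨBC) / 3)
    (hsym : 0 ≤ (ΨAB + ΨAC + ΨBC) / 3) :
    IsDensity (wernerJoint ΨAB ΨAC ΨBC) := by
  have hr2 := sq_norm_add_cubeRoot_mul ΨBC ΨAC ΨAB
  refine ⟨transpComb_posSemidef (r := ‖(ΨBC : ℂ) + ω * ΨAC + ω ^ 2 * ΨAB‖ / 6) ?_
    (by positivity) ?_ (by linarith), ?_⟩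
  · linarith
  · rw [div_pow, hr2]; ring
  · rw [← trace_trA3, trA3_wernerJoint, trace_wernerState le_rfl]

end Joinability

theorem werner_three_party_joinability_d_eq_2_general
    (ΨAB ΨAC ΨBC : ℝ) :
    (∃ w : Matrix (Fin 2 × Fin 2 × Fin 2) (Fin 2 × Fin 2 × Fin 2) ℂ,
        IsDensity w ∧ trC3 w = wernerState 2 ΨAB ∧ trB3 w = wernerState 2 ΨAC ∧
          trA3 w = wernerState 2 ΨBC) ↔
      (1 - (ΨAB + ΨAC + ΨBC) / 3 ≥
          2 / 3 * ‖(ΨBC : ℂ) + Complex.exp (2 * Real.pi * Complex.I / 3) * (ΨAC : ℂ)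
            + Complex.exp (2 * Real.pi * Complex.I / 3) ^ 2 * (ΨAB : ℂ)‖ ∧
        (ΨAB + ΨAC + ΨBC) / 3 ≥ 0) := by
  constructor
  · rintro ⟨w, hw, hC, hB, hA⟩
    exact joinability_conditions_of_marginals hw hC hB hA
  · rintro ⟨hmix, hsym⟩
    exact ⟨wernerJoint ΨAB ΨAC ΨBC, isDensity_wernerJoint hmix hsym, trC3_wernerJoint,
      trB3_wernerJoint, trA3_wernerJoint⟩

theorem werner_three_party_joinability_d_eq_2
    (ΨAB ΨAC ΨBC : ℝ)
    (hAB : ΨAB ∈ Set.Icc (-1 : ℝ) 1) (hAC : ΨAC ∈ Set.Icc (-1 : ℝ) 1)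
    (hBC : ΨBC ∈ Set.Icc (-1 : ℝ) 1) :
    (∃ w : Matrix (Fin 2 × Fin 2 × Fin 2) (Fin 2 × Fin 2 × Fin 2) ℂ,
        IsDensity w ∧ trC3 w = wernerState 2 ΨAB ∧ trB3 w = wernerState 2 ΨAC ∧
          trA3 w = wernerState 2 ΨBC) ↔
      (1 - (ΨAB + ΨAC + ΨBC) / 3 ≥
          2 / 3 * ‖(ΨBC : ℂ) + Complex.exp (2 * Real.pi * Complex.I / 3) * (ΨAC : ℂ)
            + Complex.exp (2 * Real.pi * Complex.I / 3) ^ 2 * (ΨAB : ℂ)‖ ∧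
        (ΨAB + ΨAC + ΨBC) / 3 ≥ 0) :=
  werner_three_party_joinability_d_eq_2_general ΨAB ΨAC ΨBC
end
end

section
/- Let H_A, H_B be finite-dimensional complex Hilbert spaces and let ψ be a unit vector in H_A ⊗ H_B. If the pure state |ψ⟩⟨ψ| is 1-2 sharable, then ψ is a product vector, i.e., ψ = a ⊗ b for some vectors a ∈ H_A and b ∈ H_B. In particular, no pure entangled bipartite state (such as a maximally entangled Bell pair) is 1-2 sharable. -/
open Matrix
open scoped ComplexOrder

noncomputable section

/-!
A positive semidefinite operator whose partial trace is the pure state `|v⟩⟨v|` is supported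
on the range of `|v⟩⟨v| ⊗ 1`, hence factors as `|v⟩⟨v| ⊗ σ`. Applied to a 1-2 extension `w`
of `|ψ⟩⟨ψ|` on `A ⊗ B₁ ⊗ B₂`, this gives `w = |ψ⟩⟨ψ|_{AB₁} ⊗ σ_{B₂}`, so the marginal on
`A ⊗ B₂` is `ρ_A ⊗ σ`. As this marginal is again `|ψ⟩⟨ψ|`, the rank-one matrix `|ψ⟩⟨ψ|` is a
Kronecker product, which forces `ψ` to be a product vector.
-/

open scoped Kronecker

namespace Matrix

variable {X Y Z 𝕜 : Type*} [Fintype X] [Fintype Y]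

def partialTraceRight [AddCommMonoid 𝕜] (W : Matrix (X × Y) (X × Y) 𝕜) : Matrix X X 𝕜 :=
  of fun x x' => ∑ y, W (x, y) (x', y)

omit [Fintype X] in
@[simp]
lemma partialTraceRight_apply [AddCommMonoid 𝕜] (W : Matrix (X × Y) (X × Y) 𝕜) (x x' : X) :
    partialTraceRight W x x' = ∑ y, W (x, y) (x', y) := rfl

lemma trace_mul_kronecker_one [CommSemiring 𝕜] [DecidableEq Y] (W : Matrix (X × Y) (X × Y) 𝕜)
    (M : Matrix X X 𝕜) :
    trace (W * (M ⊗ₖ (1 : Matrix Y Y 𝕜))) = trace (partialTraceRight W * M) := by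
  simp only [trace, diag, mul_apply, Fintype.sum_prod_type, kroneckerMap_apply, one_apply, mul_ite,
    mul_one, mul_zero, Finset.sum_ite_eq', Finset.mem_univ, if_true, partialTraceRight_apply,
    Finset.sum_mul]
  exact Finset.sum_congr rfl fun x _ => Finset.sum_comm

omit [Fintype X] in
lemma partialTraceRight_submatrix_kronecker [CommSemiring 𝕜] (M : Matrix (X × Y) (X × Y) 𝕜)
    (N : Matrix Z Z 𝕜) :
    partialTraceRight ((M ⊗ₖ N).submatrix (fun p => ((p.1.1, p.2), p.1.2))
      (fun p => ((p.1.1, p.2), p.1.2))) = partialTraceRight M ⊗ₖ N := by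
  ext ⟨x, z⟩ ⟨x', z'⟩
  simp [Finset.sum_mul]

lemma isStarProjection_vecMulVec_star [RCLike 𝕜] {v : X → 𝕜} (hv : star v ⬝ᵥ v = 1) :
    IsStarProjection (vecMulVec v (star v)) where
  isIdempotentElem := by rw [IsIdempotentElem, vecMulVec_mul_vecMulVec, hv, one_smul]
  isSelfAdjoint := by rw [IsSelfAdjoint, star_eq_conjTranspose, conjTranspose_vecMulVec, star_star]

open scoped MatrixOrder in
lemma PosSemidef.mul_eq_zero_of_trace_conjTranspose_mul_mul_eq_zero [RCLike 𝕜] [DecidableEq X]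
    {W : Matrix X X 𝕜} (hW : W.PosSemidef) {Q : Matrix X Y 𝕜} (h : (Qᴴ * W * Q).trace = 0) :
    W * Q = 0 := by
  obtain ⟨B, rfl⟩ := CStarAlgebra.nonneg_iff_eq_star_mul_self.mp hW.nonneg
  have hBQ : B * Q = 0 := by
    rwa [← trace_conjTranspose_mul_self_eq_zero_iff, conjTranspose_mul, ← Matrix.mul_assoc,
      Matrix.mul_assoc Qᴴ, ← star_eq_conjTranspose]
  rw [Matrix.mul_assoc, hBQ, Matrix.mul_zero]

/-- The partial trace of `W` against `1 - P` vanishes, so `W` kills the range of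
`(1 - P) ⊗ 1`. -/
lemma PosSemidef.mul_kronecker_one_eq_self [RCLike 𝕜] [DecidableEq X] [DecidableEq Y]
    {W : Matrix (X × Y) (X × Y) 𝕜} (hW : W.PosSemidef) {P : Matrix X X 𝕜}
    (hP : IsStarProjection P) (h : partialTraceRight W = P) :
    W * (P ⊗ₖ 1) = W := by
  set Q : Matrix (X × Y) (X × Y) 𝕜 := (1 - P) ⊗ₖ 1
  have hQ : Q * Qᴴ = Q := by
    rw [conjTranspose_kronecker, conjTranspose_one, ← mul_kronecker_mul, Matrix.mul_one,
      ← star_eq_conjTranspose, hP.one_sub.isSelfAdjoint.star_eq, hP.one_sub.isIdempotentElem.eq]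
  have hWQ : W * Q = 0 := by
    refine hW.mul_eq_zero_of_trace_conjTranspose_mul_mul_eq_zero ?_
    rw [trace_mul_cycle, hQ, trace_mul_comm, trace_mul_kronecker_one, h, hP.mul_one_sub_self,
      trace_zero]
  have hsplit : P ⊗ₖ (1 : Matrix Y Y 𝕜) + Q = 1 := by
    rw [← add_kronecker, add_sub_cancel, one_kronecker_one]
  calc W * (P ⊗ₖ 1) = W * (P ⊗ₖ 1) + W * Q := by rw [hWQ, add_zero]
    _ = W := by rw [← Matrix.mul_add, hsplit, Matrix.mul_one]

theorem PosSemidef.exists_eq_vecMulVec_kronecker [RCLike 𝕜] [DecidableEq X] [DecidableEq Y]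
    {W : Matrix (X × Y) (X × Y) 𝕜} (hW : W.PosSemidef) {v : X → 𝕜} (hv : star v ⬝ᵥ v = 1)
    (h : partialTraceRight W = vecMulVec v (star v)) :
    ∃ σ : Matrix Y Y 𝕜, W = vecMulVec v (star v) ⊗ₖ σ := by
  have hright := hW.mul_kronecker_one_eq_self (isStarProjection_vecMulVec_star hv) h
  have hleft : (vecMulVec v (star v) ⊗ₖ 1) * W = W := by
    simpa [conjTranspose_kronecker, conjTranspose_vecMulVec, hW.isHermitian.eq]
      using congrArg (fun M => Mᴴ) hright
  refine ⟨of fun y y' => ∑ x, ∑ x', star (v x) * W (x, y) (x', y') * v x', ?_⟩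
  conv_lhs => rw [← hright, ← hleft]
  ext ⟨x, y⟩ ⟨x', y'⟩
  simp only [mul_apply, Fintype.sum_prod_type, kroneckerMap_apply, one_apply, mul_ite, mul_one,
    mul_zero, ite_mul, zero_mul, Finset.sum_ite_eq, Finset.sum_ite_eq', Finset.mem_univ, if_true,
    of_apply, vecMulVec_apply, Pi.star_apply, Finset.mul_sum, Finset.sum_mul]
  rw [Finset.sum_comm]
  exact Finset.sum_congr rfl fun _ _ => Finset.sum_congr rfl fun _ _ => by ring

end Matrix

lemma exists_eq_mul_of_vecMulVec_eq_kronecker {X Y K : Type*} [Field K] [StarRing K]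
    {ψ : X × Y → K} (hψ : ψ ≠ 0) {M : Matrix X X K} {N : Matrix Y Y K}
    (h : vecMulVec ψ (star ψ) = M ⊗ₖ N) :
    ∃ (a : X → K) (b : Y → K), ∀ p, ψ p = a p.1 * b p.2 := by
  obtain ⟨p₀, hp₀⟩ := Function.ne_iff.mp hψ
  refine ⟨fun x => M x p₀.1, fun y => N y p₀.2 / star (ψ p₀), fun p => ?_⟩
  rw [← mul_div_assoc, eq_div_iff (star_ne_zero.mpr hp₀)]
  exact congrFun (congrFun h p) p₀

section OneTwoExtension

variable {A B : Type*} [Fintype A] [DecidableEq A] [Fintype B] [DecidableEq B]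

def oneTwoEquiv (A B : Type*) : (A × B) × B ≃ (Fin 1 → A) × (Fin 2 → B) :=
  (Equiv.prodAssoc A B B).trans
    ((Equiv.funUnique (Fin 1) A).symm.prodCongr (finTwoArrowEquiv B).symm)

lemma pairReduce_zero_zero
    (w : Matrix ((Fin 1 → A) × (Fin 2 → B)) ((Fin 1 → A) × (Fin 2 → B)) ℂ) :
    pairReduce w 0 0 = partialTraceRight (w.submatrix (oneTwoEquiv A B) (oneTwoEquiv A B)) := by
  ext ⟨a, b⟩ ⟨a', b'⟩
  have hupdA : Function.update (uniqueElim a : Fin 1 → A) 0 a' = uniqueElim a' :=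
    Function.update_eq_const_of_subsingleton ..
  have hupdB (c : B) : Function.update ![b, c] 0 b' = ![b', c] := by ext i; fin_cases i <;> simp
  rw [pairReduce, ← Fintype.sum_prod_type', ← (oneTwoEquiv A B).sum_comp]
  simp [oneTwoEquiv, Fintype.sum_prod_type, hupdA, hupdB, ite_and]

lemma pairReduce_zero_one
    (w : Matrix ((Fin 1 → A) × (Fin 2 → B)) ((Fin 1 → A) × (Fin 2 → B)) ℂ) :
    pairReduce w 0 1 = partialTraceRight
      ((w.submatrix (oneTwoEquiv A B) (oneTwoEquiv A B)).submatrix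
        (fun p => ((p.1.1, p.2), p.1.2)) (fun p => ((p.1.1, p.2), p.1.2))) := by
  ext ⟨a, b⟩ ⟨a', b'⟩
  have hupdA : Function.update (uniqueElim a : Fin 1 → A) 0 a' = uniqueElim a' :=
    Function.update_eq_const_of_subsingleton ..
  have hupdB (c : B) : Function.update ![c, b] 1 b' = ![c, b'] := by ext i; fin_cases i <;> simp
  rw [pairReduce, ← Fintype.sum_prod_type', ← (oneTwoEquiv A B).sum_comp]
  simp [oneTwoEquiv, Fintype.sum_prod_type, hupdA, hupdB, ite_and]

end OneTwoExtension

theorem pure_state_one_two_sharable_implies_product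
    {A B : Type*} [Fintype A] [DecidableEq A] [Fintype B] [DecidableEq B]
    (ψ : A × B → ℂ) (hunit : ∑ p, Complex.normSq (ψ p) = 1)
    (hshare : Sharable 1 2 ((fun p q => ψ p * star (ψ q)) : Matrix (A × B) (A × B) ℂ)) :
    ∃ (a : A → ℂ) (b : B → ℂ), ∀ p : A × B, ψ p = a p.1 * b p.2 := by
  obtain ⟨w, ⟨hw, -⟩, hred⟩ := hshare
  have hψ : star ψ ⬝ᵥ ψ = 1 := by
    simp [dotProduct, ← Complex.normSq_eq_conj_mul_self, ← Complex.ofReal_sum, hunit]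
  have h₀₀ := hred 0 0
  have h₀₁ := hred 0 1
  rw [pairReduce_zero_zero] at h₀₀
  obtain ⟨σ, hσ⟩ := (hw.submatrix _).exists_eq_vecMulVec_kronecker hψ h₀₀
  rw [pairReduce_zero_one, hσ, partialTraceRight_submatrix_kronecker] at h₀₁
  exact exists_eq_mul_of_vecMulVec_eq_kronecker (by rintro rfl; simp at hψ) h₀₁.symm
end
end

section
/- Let α_AB, α_AC, α_BC ∈ [0,1] and d = 2. There exists a probability distribution w on {1,2}×{1,2}×{1,2} (variables A, B, C) whose marginal on (A,B) is p_{α_AB}, whose marginal on (A,C) is p_{α_AC}, and whose marginal on (B,C) is p_{α_BC}, if and only if all four inequalities hold: α_AB + α_AC + α_BC ≥ 1, −α_AB + α_AC + α_BC ≤ 1, α_AB − α_AC + α_BC ≤ 1, and α_AB + α_AC − α_BC ≤ 1. -/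
/-!
Under a joint distribution `w` with the prescribed marginals, `αAB = P(A = B)`, and similarly
for the other two pairs. Transitivity of equality gives `P(A = B) + P(A = C) ≤ 1 + P(B = C)`
and its two permutations, for every `d`. For `d = 2`, two of any three values agree, so the union
bound gives `1 ≤ αAB + αAC + αBC`. Conversely, a triple in `Fin 2` has one of four agreement
patterns (all equal, or exactly one equal pair), and the four slacks in the inequalities are twice
the probabilities the marginals force on these patterns; splitting each evenly between the two
triples of its pattern gives the joint distribution.
-/

noncomputable section

/-- The classical analogue distribution `p_α` on `{1,…,d}×{1,…,d}`:
`p_α(i,j) = (α/d)·δ_{ij} + ((1−α)/(d(d−1)))·(1−δ_{ij})`. -/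
def classicalState (d : ℕ) (α : ℝ) (i j : Fin d) : ℝ :=
  if i = j then α / d else (1 - α) / (d * (d - 1))

/-- `Joins d w αAB αAC αBC` : the distribution `w` on triples has the classical
analogue states with parameters `αAB`, `αAC`, `αBC` as its pair marginals. -/
def Joins (d : ℕ) (w : Fin d × Fin d × Fin d → ℝ) (αAB αAC αBC : ℝ) : Prop :=
  (∀ x, 0 ≤ w x) ∧ (∑ x, w x = 1) ∧
    (∀ a b, ∑ c, w (a, b, c) = classicalState d αAB a b) ∧
    (∀ a c, ∑ b, w (a, b, c) = classicalState d αAC a c) ∧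
    (∀ b c, ∑ a, w (a, b, c) = classicalState d αBC b c)

open Finset

section Agreement

variable {ι : Type*} [Fintype ι] {w : ι → ℝ} {p q r : ι → Prop}
  [DecidablePred p] [DecidablePred q] [DecidablePred r]

theorem sum_ite_add_sum_ite_le (hw : ∀ i, 0 ≤ w i) (hpqr : ∀ i, p i → q i → r i) :
    ∑ i, (if p i then w i else 0) + ∑ i, (if q i then w i else 0) ≤
      ∑ i, w i + ∑ i, (if r i then w i else 0) := by
  simp only [← sum_add_distrib]
  refine sum_le_sum fun i _ => ?_
  have := hw i
  have := hpqr i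
  split_ifs <;> simp_all

theorem sum_le_sum_ite_add_sum_ite_add_sum_ite (hw : ∀ i, 0 ≤ w i)
    (hpqr : ∀ i, p i ∨ q i ∨ r i) :
    ∑ i, w i ≤ ∑ i, (if p i then w i else 0) + ∑ i, (if q i then w i else 0) +
      ∑ i, (if r i then w i else 0) := by
  simp only [← sum_add_distrib]
  refine sum_le_sum fun i _ => ?_
  have := hw i
  have := hpqr i
  split_ifs <;> simp_all

end Agreement

theorem sum_classicalState_diag {d : ℕ} (hd : d ≠ 0) (α : ℝ) :
    ∑ i : Fin d, classicalState d α i i = α := by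
  simp only [classicalState, if_true, sum_const, card_univ, Fintype.card_fin, nsmul_eq_mul]
  field_simp

namespace Joins

variable {d : ℕ} {w : Fin d × Fin d × Fin d → ℝ} {αAB αAC αBC : ℝ}

theorem sum_ite_fst_eq_snd (h : Joins d w αAB αAC αBC) (hd : d ≠ 0) :
    ∑ x, (if x.1 = x.2.1 then w x else 0) = αAB := by
  simp only [Fintype.sum_prod_type]
  change ∑ a, ∑ b, ∑ c, (if a = b then w (a, b, c) else 0) = αAB
  simp [h.2.2.1, sum_classicalState_diag hd]

theorem sum_ite_fst_eq_snd_snd (h : Joins d w αAB αAC αBC) (hd : d ≠ 0) :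
    ∑ x, (if x.1 = x.2.2 then w x else 0) = αAC := by
  simp only [Fintype.sum_prod_type]
  change ∑ a, ∑ b, ∑ c, (if a = c then w (a, b, c) else 0) = αAC
  simp_rw [sum_comm (γ := Fin d) (s := univ) (t := univ)
    (f := fun b c => if _ = c then w (_, b, c) else 0)]
  simp [h.2.2.2.1, sum_classicalState_diag hd]

theorem sum_ite_snd_eq_snd_snd (h : Joins d w αAB αAC αBC) (hd : d ≠ 0) :
    ∑ x, (if x.2.1 = x.2.2 then w x else 0) = αBC := by
  simp only [Fintype.sum_prod_type]
  change ∑ a, ∑ b, ∑ c, (if b = c then w (a, b, c) else 0) = αBC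
  rw [sum_comm]
  simp [h.2.2.2.2, sum_classicalState_diag hd]

theorem add_sub_le_one (h : Joins d w αAB αAC αBC) (hd : d ≠ 0) : αAB + αAC - αBC ≤ 1 := by
  have := sum_ite_add_sum_ite_le h.1 fun x (hab : x.1 = x.2.1) (hac : x.1 = x.2.2) =>
    hab.symm.trans hac
  rw [h.sum_ite_fst_eq_snd hd, h.sum_ite_fst_eq_snd_snd hd, h.sum_ite_snd_eq_snd_snd hd,
    h.2.1] at this
  linarith

theorem sub_add_le_one (h : Joins d w αAB αAC αBC) (hd : d ≠ 0) : αAB - αAC + αBC ≤ 1 := by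
  have := sum_ite_add_sum_ite_le h.1 fun x (hab : x.1 = x.2.1) (hbc : x.2.1 = x.2.2) =>
    hab.trans hbc
  rw [h.sum_ite_fst_eq_snd hd, h.sum_ite_fst_eq_snd_snd hd, h.sum_ite_snd_eq_snd_snd hd,
    h.2.1] at this
  linarith

theorem neg_add_add_le_one (h : Joins d w αAB αAC αBC) (hd : d ≠ 0) : -αAB + αAC + αBC ≤ 1 := by
  have := sum_ite_add_sum_ite_le h.1 fun x (hac : x.1 = x.2.2) (hbc : x.2.1 = x.2.2) =>
    hac.trans hbc.symm
  rw [h.sum_ite_fst_eq_snd hd, h.sum_ite_fst_eq_snd_snd hd, h.sum_ite_snd_eq_snd_snd hd,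
    h.2.1] at this
  linarith

end Joins

theorem fin_two_eq_or_eq_or_eq : ∀ a b c : Fin 2, a = b ∨ a = c ∨ b = c := by
  decide

theorem Joins.one_le_add_add {w : Fin 2 × Fin 2 × Fin 2 → ℝ} {αAB αAC αBC : ℝ}
    (h : Joins 2 w αAB αAC αBC) : 1 ≤ αAB + αAC + αBC := by
  have := sum_le_sum_ite_add_sum_ite_add_sum_ite h.1 fun x => fin_two_eq_or_eq_or_eq x.1 x.2.1 x.2.2
  rwa [h.sum_ite_fst_eq_snd two_ne_zero, h.sum_ite_fst_eq_snd_snd two_ne_zero,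
    h.sum_ite_snd_eq_snd_snd two_ne_zero, h.2.1] at this

/-- Each of the four agreement patterns of a triple in `Fin 2` consists of two triples, and each
of them gets half the probability the marginals force on the pattern, e.g.
`P(A = B = C) = (αAB + αAC + αBC - 1) / 2`. -/
def patternWitness (αAB αAC αBC : ℝ) (x : Fin 2 × Fin 2 × Fin 2) : ℝ :=
  if x.1 = x.2.1 ∧ x.1 = x.2.2 then (αAB + αAC + αBC - 1) / 4
  else if x.1 = x.2.1 then (1 + αAB - αAC - αBC) / 4
  else if x.1 = x.2.2 then (1 - αAB + αAC - αBC) / 4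
  else (1 - αAB - αAC + αBC) / 4

theorem joins_patternWitness {αAB αAC αBC : ℝ} (h₁ : 1 ≤ αAB + αAC + αBC)
    (h₂ : -αAB + αAC + αBC ≤ 1) (h₃ : αAB - αAC + αBC ≤ 1) (h₄ : αAB + αAC - αBC ≤ 1) :
    Joins 2 (patternWitness αAB αAC αBC) αAB αAC αBC := by
  refine ⟨fun x => ?_, ?_, ?_, ?_, ?_⟩
  · unfold patternWitness
    split_ifs <;> linarith
  · simp [patternWitness, Fintype.sum_prod_type, Fin.sum_univ_two]
    ring
  all_goals
    intro i j
    fin_cases i <;> fin_cases j <;>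
      simp [patternWitness, classicalState, Fin.sum_univ_two] <;> ring

theorem classical_three_party_joinability_d_eq_2_general
    (αAB αAC αBC : ℝ) :
    (∃ w : Fin 2 × Fin 2 × Fin 2 → ℝ, Joins 2 w αAB αAC αBC) ↔
      (1 ≤ αAB + αAC + αBC ∧ -αAB + αAC + αBC ≤ 1 ∧
        αAB - αAC + αBC ≤ 1 ∧ αAB + αAC - αBC ≤ 1) := by
  constructor
  · rintro ⟨w, hw⟩
    exact ⟨hw.one_le_add_add, hw.neg_add_add_le_one two_ne_zero,
      hw.sub_add_le_one two_ne_zero, hw.add_sub_le_one two_ne_zero⟩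
  · rintro ⟨h₁, h₂, h₃, h₄⟩
    exact ⟨_, joins_patternWitness h₁ h₂ h₃ h₄⟩

theorem classical_three_party_joinability_d_eq_2
    (αAB αAC αBC : ℝ) (hAB : αAB ∈ Set.Icc (0 : ℝ) 1) (hAC : αAC ∈ Set.Icc (0 : ℝ) 1)
    (hBC : αBC ∈ Set.Icc (0 : ℝ) 1) :
    (∃ w : Fin 2 × Fin 2 × Fin 2 → ℝ, Joins 2 w αAB αAC αBC) ↔
      (1 ≤ αAB + αAC + αBC ∧ -αAB + αAC + αBC ≤ 1 ∧
        αAB - αAC + αBC ≤ 1 ∧ αAB + αAC - αBC ≤ 1) :=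
  classical_three_party_joinability_d_eq_2_general αAB αAC αBC
end
end

section
/- Let d ≥ 3 and α_AB, α_AC, α_BC ∈ [0,1]. There exists a probability distribution w on {1,…,d}×{1,…,d}×{1,…,d} (variables A, B, C) whose marginal on (A,B) is p_{α_AB}, whose marginal on (A,C) is p_{α_AC}, and whose marginal on (B,C) is p_{α_BC}, if and only if all three inequalities hold: −α_AB + α_AC + α_BC ≤ 1, α_AB − α_AC + α_BC ≤ 1, and α_AB + α_AC − α_BC ≤ 1. Equivalently, the set of joinable triples (α_AB, α_AC, α_BC) is the convex hull of the five points (1,1,1), (1,0,0), (0,1,0), (0,0,1), (0,0,0). -/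
noncomputable section

/-!
The parameter `α` of `p_α` is the probability that the two coordinates agree. So if `w` joins
the three marginals, `(α_AB, α_AC, α_BC)` is the `w`-expectation of the equality pattern
`(1[a = b], 1[a = c], 1[b = c])` of a triple, which by transitivity of equality is one of the
five vertices: joinable triples lie in their convex hull. Conversely, the uniform distribution on
the triples of a fixed pattern is invariant under relabelling the alphabet, and a
permutation-invariant distribution on pairs is some `p_α`; hence every vertex is joinable (the
pattern "all distinct" needs `d ≥ 3`), and mixtures of joining distributions join the mixed
parameters. Among nonnegative triples, the hull is cut out by the three inequalities, which are
the triangle inequalities for `1 - α = P(≠)`.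
-/

open Finset

theorem Equiv.Perm.exists_apply_eq_and_apply_eq {α : Type*} [DecidableEq α] {i j k l : α}
    (hij : i ≠ j) (hkl : k ≠ l) : ∃ σ : Equiv.Perm α, σ i = k ∧ σ j = l := by
  refine ⟨(Equiv.swap i k).trans (Equiv.swap (Equiv.swap i k j) l), ?_, by simp⟩
  have hk : k ≠ Equiv.swap i k j := by
    rw [ne_comm, Ne, Equiv.swap_apply_eq_iff, Equiv.swap_apply_right]
    exact hij.symm
  simp [Equiv.swap_apply_of_ne_of_ne hk hkl]

theorem eq_classicalState_of_perm_invariant {d : ℕ} {f : Fin d → Fin d → ℝ}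
    (hf : ∀ (σ : Equiv.Perm (Fin d)) i j, f (σ i) (σ j) = f i j)
    (hsum : ∑ i, ∑ j, f i j = 1) (i j : Fin d) :
    f i j = classicalState d (∑ k, f k k) i j := by
  have hdiag : ∀ k, f k k = f i i := fun k => by simpa using hf (Equiv.swap i k) i i
  have hd : (d : ℝ) ≠ 0 := by have := i.pos; positivity
  rw [classicalState, sum_congr rfl fun k _ => hdiag k, sum_const, card_univ, Fintype.card_fin,
    nsmul_eq_mul]
  split_ifs with hij
  · subst hij
    field_simp
  · have hd1 : (d : ℝ) - 1 ≠ 0 := by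
      have : 2 ≤ d := by have := Fin.val_ne_of_ne hij; omega
      have : (2 : ℝ) ≤ d := by exact_mod_cast this
      linarith
    have hoff : ∀ k l, f k l = if k = l then f i i else f i j := by
      intro k l
      split_ifs with hkl
      · rw [hkl, hdiag]
      · obtain ⟨σ, rfl, rfl⟩ := Equiv.Perm.exists_apply_eq_and_apply_eq hij hkl
        exact hf σ i j
    have hrow : ∀ k, ∑ l, f k l = f i i + (d - 1) * f i j := by
      intro k
      rw [Fintype.sum_congr _ _ (hoff k), sum_ite, filter_eq, filter_ne]
      simp [card_erase_of_mem, Nat.cast_sub i.pos]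
    simp only [hrow, sum_const, card_univ, Fintype.card_fin, nsmul_eq_mul] at hsum
    field_simp
    linear_combination hsum

def eqPattern {d : ℕ} (t : Fin d × Fin d × Fin d) : ℝ × ℝ × ℝ :=
  (if t.1 = t.2.1 then 1 else 0, if t.1 = t.2.2 then 1 else 0, if t.2.1 = t.2.2 then 1 else 0)

theorem sum_smul_eqPattern {d : ℕ} (w : Fin d × Fin d × Fin d → ℝ) :
    ∑ t, w t • eqPattern t =
      (∑ a, ∑ c, w (a, a, c), ∑ a, ∑ b, w (a, b, a), ∑ b, ∑ a, w (a, b, b)) := by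
  simp only [eqPattern, Prod.ext_iff, Prod.fst_sum, Prod.snd_sum, Prod.smul_mk, smul_eq_mul,
    mul_ite, mul_one, mul_zero, Fintype.sum_prod_type]
  refine ⟨?_, ?_, ?_⟩
  · refine sum_congr rfl fun a _ => ?_
    rw [sum_comm]
    simp only [sum_ite_eq, mem_univ, if_true]
  · simp only [sum_ite_eq, mem_univ, if_true]
  · rw [sum_comm]
    simp only [sum_ite_eq, mem_univ, if_true]

theorem Joins.sum_smul_eqPattern {d : ℕ} {w : Fin d × Fin d × Fin d → ℝ} {x y z : ℝ}
    (h : Joins d w x y z) : ∑ t, w t • eqPattern t = (x, y, z) := by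
  obtain ⟨-, hsum, hAB, hAC, hBC⟩ := h
  have hd : d ≠ 0 := by rintro rfl; simp at hsum
  rw [_root_.sum_smul_eqPattern]
  simp only [hAB, hAC, hBC, sum_classicalState_diag hd]

theorem eqPattern_perm {d : ℕ} (σ : Equiv.Perm (Fin d)) (a b c : Fin d) :
    eqPattern (σ a, σ b, σ c) = eqPattern (a, b, c) := by
  simp [eqPattern]

theorem joins_of_perm_invariant {d : ℕ} {w : Fin d × Fin d × Fin d → ℝ} {x y z : ℝ}
    (hw0 : ∀ t, 0 ≤ w t) (hw1 : ∑ t, w t = 1)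
    (hw : ∀ (σ : Equiv.Perm (Fin d)) a b c, w (σ a, σ b, σ c) = w (a, b, c))
    (hmean : ∑ t, w t • eqPattern t = (x, y, z)) :
    Joins d w x y z := by
  rw [sum_smul_eqPattern, Prod.mk.injEq, Prod.mk.injEq] at hmean
  obtain ⟨rfl, rfl, rfl⟩ := hmean
  have htotAB : ∑ a, ∑ b, ∑ c, w (a, b, c) = 1 := by
    simpa only [Fintype.sum_prod_type] using hw1
  have htotAC : ∑ a, ∑ c, ∑ b, w (a, b, c) = 1 := by
    rw [← htotAB]; exact sum_congr rfl fun a _ => sum_comm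
  have htotBC : ∑ b, ∑ c, ∑ a, w (a, b, c) = 1 := by
    rw [← htotAB]; exact (sum_congr rfl fun b _ => sum_comm).trans sum_comm
  refine ⟨hw0, hw1,
    fun a b => eq_classicalState_of_perm_invariant (fun σ a b => ?_) htotAB a b,
    fun a c => eq_classicalState_of_perm_invariant (f := fun a c => ∑ b, w (a, b, c))
      (fun σ a c => ?_) htotAC a c,
    fun b c => eq_classicalState_of_perm_invariant (f := fun b c => ∑ a, w (a, b, c))
      (fun σ b c => ?_) htotBC b c⟩ <;>
  · rw [← Equiv.sum_comp σ]; simp only [hw]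

def uniformOn {ι : Type*} [DecidableEq ι] (s : Finset ι) (t : ι) : ℝ :=
  if t ∈ s then (#s : ℝ)⁻¹ else 0

theorem uniformOn_nonneg {ι : Type*} [DecidableEq ι] (s : Finset ι) (t : ι) :
    0 ≤ uniformOn s t := by
  unfold uniformOn; split_ifs <;> positivity

theorem sum_uniformOn_smul {ι E : Type*} [Fintype ι] [DecidableEq ι] [AddCommMonoid E]
    [Module ℝ E] {s : Finset ι} (hs : s.Nonempty) {g : ι → E} {p : E}
    (hg : ∀ t ∈ s, g t = p) :
    ∑ t, uniformOn s t • g t = p := by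
  simp only [uniformOn, ite_smul, zero_smul]
  rw [sum_ite_mem, univ_inter, sum_congr rfl fun t ht => by rw [hg t ht], sum_const,
    ← Nat.cast_smul_eq_nsmul ℝ, smul_smul, mul_inv_cancel₀ (by exact_mod_cast hs.card_ne_zero),
    one_smul]

theorem joins_of_mem_range_eqPattern {d : ℕ} {p : ℝ × ℝ × ℝ}
    (hp : p ∈ Set.range (@eqPattern d)) :
    ∃ w, Joins d w p.1 p.2.1 p.2.2 := by
  set s := univ.filter fun t : Fin d × Fin d × Fin d => eqPattern t = p
  have hs : s.Nonempty := by obtain ⟨t, rfl⟩ := hp; exact ⟨t, by simp [s]⟩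
  refine ⟨uniformOn s, joins_of_perm_invariant (uniformOn_nonneg s) ?_ (fun σ a b c => ?_)
    (sum_uniformOn_smul hs fun t ht => (mem_filter.1 ht).2)⟩
  · simpa using sum_uniformOn_smul (g := fun _ => (1 : ℝ)) hs fun _ _ => rfl
  · simp [uniformOn, s, eqPattern_perm]

theorem mul_classicalState_add_mul_classicalState {d : ℕ} {s t : ℝ} (hst : s + t = 1)
    (α β : ℝ) (i j : Fin d) :
    s * classicalState d α i j + t * classicalState d β i j =
      classicalState d (s * α + t * β) i j := by
  obtain rfl : t = 1 - s := by linarith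
  unfold classicalState
  split_ifs <;> ring

theorem convex_setOf_joins (d : ℕ) :
    Convex ℝ {p : ℝ × ℝ × ℝ | ∃ w, Joins d w p.1 p.2.1 p.2.2} := by
  rintro ⟨x, y, z⟩ ⟨w, hw0, hw1, hAB, hAC, hBC⟩
    ⟨x', y', z'⟩ ⟨w', hw0', hw1', hAB', hAC', hBC'⟩ s t hs ht hst
  refine ⟨fun u => s * w u + t * w' u, fun u => by have := hw0 u; have := hw0' u; positivity,
    ?_, ?_, ?_, ?_⟩ <;>
  simp only [sum_add_distrib, ← mul_sum, Prod.smul_mk, Prod.mk_add_mk, smul_eq_mul, *,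
    mul_classicalState_add_mul_classicalState hst, implies_true, mul_one]

theorem setOf_joins_eq_convexHull (d : ℕ) :
    {p : ℝ × ℝ × ℝ | ∃ w, Joins d w p.1 p.2.1 p.2.2} =
      convexHull ℝ (Set.range (@eqPattern d)) := by
  refine subset_antisymm ?_
    (convexHull_min (fun _ hp => joins_of_mem_range_eqPattern hp) (convex_setOf_joins d))
  rintro ⟨x, y, z⟩ ⟨w, hw : Joins d w x y z⟩
  rw [← hw.sum_smul_eqPattern]
  exact (convex_convexHull ℝ _).sum_mem (fun t _ => hw.1 t) hw.2.1
    fun t _ => subset_convexHull ℝ _ (Set.mem_range_self t)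

theorem range_eqPattern {d : ℕ} (hd : 3 ≤ d) :
    Set.range (@eqPattern d) =
      ({(1, 1, 1), (1, 0, 0), (0, 1, 0), (0, 0, 1), (0, 0, 0)} : Set (ℝ × ℝ × ℝ)) := by
  obtain ⟨i, j, k, hij, hik, hjk⟩ :=
    (Fintype.two_lt_card_iff (α := Fin d)).1 (by rw [Fintype.card_fin]; omega)
  ext p
  constructor
  · rintro ⟨⟨a, b, c⟩, rfl⟩
    simp only [eqPattern]
    by_cases hab : a = b <;> by_cases hac : a = c <;> by_cases hbc : b = c <;> simp_all
  · rintro (rfl | rfl | rfl | rfl | rfl)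
    exacts [⟨(i, i, i), by simp [eqPattern]⟩, ⟨(i, i, j), by simp [eqPattern, hij]⟩,
      ⟨(i, j, i), by simp [eqPattern, hij, hij.symm]⟩,
      ⟨(j, i, i), by simp [eqPattern, hij.symm]⟩,
      ⟨(i, j, k), by simp [eqPattern, hij, hik, hjk]⟩]

theorem convex_setOf_triangle_ineq :
    Convex ℝ {p : ℝ × ℝ × ℝ |
      -p.1 + p.2.1 + p.2.2 ≤ 1 ∧ p.1 - p.2.1 + p.2.2 ≤ 1 ∧ p.1 + p.2.1 - p.2.2 ≤ 1} := by
  rintro ⟨x, y, z⟩ ⟨h₁, h₂, h₃⟩ ⟨x', y', z'⟩ ⟨h₁', h₂', h₃'⟩ a b ha hb hab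
  simp only [Set.mem_ofPred_eq, Prod.smul_mk, Prod.mk_add_mk, smul_eq_mul] at *
  refine ⟨?_, ?_, ?_⟩ <;>
  linarith [mul_le_mul_of_nonneg_left h₁ ha, mul_le_mul_of_nonneg_left h₁' hb,
    mul_le_mul_of_nonneg_left h₂ ha, mul_le_mul_of_nonneg_left h₂' hb,
    mul_le_mul_of_nonneg_left h₃ ha, mul_le_mul_of_nonneg_left h₃' hb]

theorem mem_convexHull_vertices_iff {x y z : ℝ} (hx : 0 ≤ x) (hy : 0 ≤ y) (hz : 0 ≤ z) :
    (x, y, z) ∈ convexHull ℝ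
        ({(1, 1, 1), (1, 0, 0), (0, 1, 0), (0, 0, 1), (0, 0, 0)} : Set (ℝ × ℝ × ℝ)) ↔
      -x + y + z ≤ 1 ∧ x - y + z ≤ 1 ∧ x + y - z ≤ 1 := by
  refine ⟨fun h => convexHull_min ?_ convex_setOf_triangle_ineq h, fun ⟨h₁, h₂, h₃⟩ => ?_⟩
  · rintro p (rfl | rfl | rfl | rfl | rfl) <;> norm_num
  set v : Fin 5 → ℝ × ℝ × ℝ := ![(1, 1, 1), (1, 0, 0), (0, 1, 0), (0, 0, 1), (0, 0, 0)]
  -- Below the plane `x + y + z = 1` mix `0` with the unit vectors, above it `(1, 1, 1)`.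
  obtain ⟨l, hl0, hl1, hlv⟩ : ∃ l : Fin 5 → ℝ,
      (∀ i, 0 ≤ l i) ∧ ∑ i, l i = 1 ∧ ∑ i, l i • v i = (x, y, z) := by
    by_cases h : x + y + z ≤ 1
    · refine ⟨![0, x, y, z, 1 - x - y - z], fun i => ?_, ?_, ?_⟩
      · fin_cases i <;> simp <;> linarith
      · simp [Fin.sum_univ_five]
      · simp [v, Fin.sum_univ_five]
    · refine ⟨![(x + y + z - 1) / 2, (1 + x - y - z) / 2, (1 - x + y - z) / 2,
        (1 - x - y + z) / 2, 0], fun i => ?_, ?_, ?_⟩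
      · fin_cases i <;> simp <;> linarith
      · simp [Fin.sum_univ_five]; ring
      · simp [v, Fin.sum_univ_five]; refine ⟨?_, ?_, ?_⟩ <;> ring
  rw [← hlv]
  exact (convex_convexHull ℝ _).sum_mem (fun i _ => hl0 i) hl1
    fun i _ => subset_convexHull ℝ _ (by fin_cases i <;> simp [v])

theorem classical_three_party_joinability_d_ge_3
    (d : ℕ) (hd : 3 ≤ d)
    (αAB αAC αBC : ℝ) (hAB : αAB ∈ Set.Icc (0 : ℝ) 1) (hAC : αAC ∈ Set.Icc (0 : ℝ) 1)
    (hBC : αBC ∈ Set.Icc (0 : ℝ) 1) :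
    ((∃ w : Fin d × Fin d × Fin d → ℝ, Joins d w αAB αAC αBC) ↔
      (-αAB + αAC + αBC ≤ 1 ∧ αAB - αAC + αBC ≤ 1 ∧ αAB + αAC - αBC ≤ 1)) ∧
    {t : ℝ × ℝ × ℝ | ∃ w : Fin d × Fin d × Fin d → ℝ, Joins d w t.1 t.2.1 t.2.2} =
      convexHull ℝ {((1 : ℝ), (1 : ℝ), (1 : ℝ)), ((1 : ℝ), (0 : ℝ), (0 : ℝ)),
        ((0 : ℝ), (1 : ℝ), (0 : ℝ)), ((0 : ℝ), (0 : ℝ), (1 : ℝ)),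
        ((0 : ℝ), (0 : ℝ), (0 : ℝ))} := by
  have hjoins := setOf_joins_eq_convexHull d
  rw [range_eqPattern hd] at hjoins
  refine ⟨?_, hjoins⟩
  rw [← mem_convexHull_vertices_iff hAB.1 hAC.1 hBC.1, ← hjoins]
  rfl
end
end
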